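/- arXiv:2303.04972 — 13 statements merged into one kernel-verified Lean document; each statement's English description precedes it below -/
import Mathlib

section
/- Under the stated hypotheses, min_{z' ∈ H} [ tλγ(z') + (1/2)‖z' - z‖² ] ≥ (1/2)[ (1-σ²)t‖z̃ - z‖² + t(1-t)‖λv‖² ]; equivalently, for every z' ∈ H, tλγ(z') + (1/2)‖z' - z‖² ≥ (1/2)[ (1-σ²)t‖z̃ - z‖² + t(1-t)‖λv‖² ]. -/
open scoped RealInnerProductSpace

/-- Lemma 1, item 3: under the HPE relative error condition, for every `z' ∈ H`,
`tλγ(z') + (1/2)‖z'-z‖² ≥ (1/2)[(1-σ²)t‖z̃-z‖² + t(1-t)‖λv‖²]`. -/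
theorem stmt_2 {H : Type*} [NormedAddCommGroup H] [InnerProductSpace ℝ H] [CompleteSpace H]
    (z ztilde v : H) (lam σ t ε : ℝ)
    (hlam : 0 < lam) (hσ0 : 0 ≤ σ) (hσ1 : σ < 1) (ht0 : 0 ≤ t) (ht1 : t ≤ 1) (hε : 0 ≤ ε)
    (herr : ‖lam • v + ztilde - z‖ ^ 2 + 2 * lam * ε ≤ σ ^ 2 * ‖ztilde - z‖ ^ 2)
    (γ : H → ℝ) (hγ : ∀ z' : H, γ z' = ⟪z' - ztilde, v⟫ - ε) :
    ∀ z' : H, t * lam * γ z' + ‖z' - z‖ ^ 2 / 2 ≥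
      ((1 - σ ^ 2) * t * ‖ztilde - z‖ ^ 2 + t * (1 - t) * ‖lam • v‖ ^ 2) / 2 := by
  intro z'
  rw [hγ]
  have hsub : z' - ztilde = (z' - z) - (ztilde - z) := by abel
  have h1 : ‖lam • v + ztilde - z‖ ^ 2
      = ‖lam • v‖ ^ 2 + 2 * ⟪lam • v, ztilde - z⟫ + ‖ztilde - z‖ ^ 2 := by
    rw [add_sub_assoc, @norm_add_sq_real]
  have h2 : (0 : ℝ) ≤ ‖(z' - z) + t • (lam • v)‖ ^ 2 := sq_nonneg _
  have h3 : ‖(z' - z) + t • (lam • v)‖ ^ 2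
      = ‖z' - z‖ ^ 2 + 2 * (t * ⟪z' - z, lam • v⟫) + t ^ 2 * ‖lam • v‖ ^ 2 := by
    rw [@norm_add_sq_real, real_inner_smul_right, norm_smul]
    simp only [Real.norm_eq_abs, abs_of_nonneg ht0]
    ring
  have h4 : ⟪z' - ztilde, v⟫ = ⟪z' - z, v⟫ - ⟪ztilde - z, v⟫ := by
    rw [hsub, inner_sub_left]
  have h5 : ⟪z' - z, lam • v⟫ = lam * ⟪z' - z, v⟫ := real_inner_smul_right _ _ _
  have h6 : ⟪lam • v, ztilde - z⟫ = lam * ⟪ztilde - z, v⟫ := by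
    rw [real_inner_smul_left, real_inner_comm]
  have hkey : 2 * (lam * ⟪ztilde - z, v⟫) ≤
      σ ^ 2 * ‖ztilde - z‖ ^ 2 - ‖ztilde - z‖ ^ 2 - ‖lam • v‖ ^ 2 - 2 * lam * ε := by
    nlinarith [herr, h1, h6]
  have hA : (0:ℝ) ≤ ‖z' - z‖ ^ 2 + 2 * (t * (lam * ⟪z' - z, v⟫)) + t ^ 2 * ‖lam • v‖ ^ 2 := by
    rw [← h5, ← h3]; exact h2
  rw [h4]
  nlinarith [mul_le_mul_of_nonneg_left hkey ht0, hA]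
end

section
/- Under the stated hypotheses, for any z* ∈ H with 0 ∈ T(z*), one has γ(z*) ≤ 0 and ‖z - z*‖² ≥ ‖z₊ - z*‖² + (1-σ²)t‖z̃ - z‖² + t(1-t)‖λv‖². -/
open scoped RealInnerProductSpace

/-- Lemma 1, item 4: for any zero `z*` of `T`, `γ(z*) ≤ 0` and
`‖z-z*‖² ≥ ‖z₊-z*‖² + (1-σ²)t‖z̃-z‖² + t(1-t)‖λv‖²`. -/
theorem stmt_3 {H : Type*} [NormedAddCommGroup H] [InnerProductSpace ℝ H] [CompleteSpace H]
    (T : Set (H × H)) (z ztilde v : H) (lam σ t ε : ℝ)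
    (hlam : 0 < lam) (hσ0 : 0 ≤ σ) (hσ1 : σ < 1) (ht0 : 0 ≤ t) (ht1 : t ≤ 1) (hε : 0 ≤ ε)
    (henl : ∀ p ∈ T, ⟪ztilde - p.1, v - p.2⟫ ≥ -ε)
    (herr : ‖lam • v + ztilde - z‖ ^ 2 + 2 * lam * ε ≤ σ ^ 2 * ‖ztilde - z‖ ^ 2)
    (γ : H → ℝ) (hγ : ∀ z' : H, γ z' = ⟪z' - ztilde, v⟫ - ε)
    (zplus : H) (hzplus : zplus = z - (t * lam) • v)
    (zstar : H) (hzstar : (zstar, (0 : H)) ∈ T) :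
    γ zstar ≤ 0 ∧
    ‖z - zstar‖ ^ 2 ≥ ‖zplus - zstar‖ ^ 2 + (1 - σ ^ 2) * t * ‖ztilde - z‖ ^ 2 +
      t * (1 - t) * ‖lam • v‖ ^ 2 := by
  have h1 : ⟪ztilde - zstar, v⟫ ≥ -ε := by simpa using henl (zstar, 0) hzstar
  have hsym : ⟪zstar - ztilde, v⟫ = -⟪ztilde - zstar, v⟫ := by
    rw [← inner_neg_left, neg_sub]
  constructor
  · rw [hγ, hsym]; linarith
  · -- expand everything
    have e1 : ‖zplus - zstar‖ ^ 2
        = ‖z - zstar‖ ^ 2 - 2 * ((t * lam) * ⟪z - zstar, v⟫) + (t * lam) ^ 2 * ‖v‖ ^ 2 := by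
      have : zplus - zstar = (z - zstar) - (t * lam) • v := by
        rw [hzplus]; abel
      rw [this, norm_sub_sq_real, real_inner_smul_right, norm_smul]
      rw [Real.norm_eq_abs, mul_pow, sq_abs]
    have e2 : ‖lam • v + ztilde - z‖ ^ 2
        = lam ^ 2 * ‖v‖ ^ 2 + 2 * (lam * ⟪v, ztilde - z⟫) + ‖ztilde - z‖ ^ 2 := by
      rw [add_sub_assoc, norm_add_sq_real, real_inner_smul_left, norm_smul,
        Real.norm_eq_abs, mul_pow, sq_abs]
    have e3 : ⟪z - zstar, v⟫ = ⟪z - ztilde, v⟫ + ⟪ztilde - zstar, v⟫ := by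
      rw [← inner_add_left]; congr 1; abel
    have e4 : ⟪v, ztilde - z⟫ = -⟪z - ztilde, v⟫ := by
      rw [real_inner_comm, ← inner_neg_left, neg_sub]
    have e5 : ‖lam • v‖ ^ 2 = lam ^ 2 * ‖v‖ ^ 2 := by
      rw [norm_smul, Real.norm_eq_abs, mul_pow, sq_abs]
    -- key inequality from herr and h1
    have key : 2 * lam * ⟪z - zstar, v⟫ ≥ lam ^ 2 * ‖v‖ ^ 2 + (1 - σ ^ 2) * ‖ztilde - z‖ ^ 2 := by
      rw [e3]
      nlinarith [e2, e4, herr, h1, hlam.le]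
    nlinarith [mul_le_mul_of_nonneg_left key ht0, e1, e5, sq_nonneg t]
end

section
/- Under the stated hypotheses, for any z* ∈ H with 0 ∈ T(z*), one has ‖z* - z̃‖ ≤ ‖z* - z‖/√(1-σ²) and ‖z̃ - z‖ ≤ ‖z* - z‖/√(1-σ²). -/
open scoped RealInnerProductSpace

lemma aux_div_sqrt (X C s : ℝ) (hX : 0 ≤ X) (hC : 0 ≤ C) (hs : 0 < s)
    (h : s * X ^ 2 ≤ C ^ 2) : X ≤ C / Real.sqrt s := by
  rw [le_div_iff₀ (Real.sqrt_pos.mpr hs)]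
  have h1 : (X * Real.sqrt s) ^ 2 ≤ C ^ 2 := by
    have := Real.sq_sqrt hs.le
    nlinarith [Real.sqrt_nonneg s]
  have h2 : 0 ≤ X * Real.sqrt s := mul_nonneg hX (Real.sqrt_nonneg s)
  nlinarith

lemma aux_key (A B R C lam ε σ : ℝ) (hA0 : 0 ≤ A) (hB0 : 0 ≤ B) (hR0 : 0 ≤ R)
    (hσ0 : 0 ≤ σ) (hs : 0 < 1 - σ ^ 2) (hlε : 0 ≤ lam * ε)
    (hC : A ^ 2 - 2 * (A * R) + B ^ 2 - 2 * (lam * ε) ≤ C ^ 2)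
    (hRB : R ^ 2 + 2 * (lam * ε) ≤ σ ^ 2 * B ^ 2) :
    (1 - σ ^ 2) * A ^ 2 ≤ C ^ 2 ∧ (1 - σ ^ 2) * B ^ 2 ≤ C ^ 2 := by
  have hD : (A - R) ^ 2 + (1 - σ ^ 2) * B ^ 2 ≤ C ^ 2 := by nlinarith
  refine ⟨?_, by nlinarith [sq_nonneg (A - R)]⟩
  rcases eq_or_lt_of_le hσ0 with hσz | hσp
  · rw [← hσz] at hRB hD
    have hR : R = 0 := by nlinarith [sq_nonneg R]
    rw [hR] at hD
    nlinarith
  · have hσ2 : 0 < σ ^ 2 := by positivity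
    have t1 : 0 ≤ (σ ^ 2 * A - R) ^ 2 := sq_nonneg _
    have t2 : 0 ≤ (1 - σ ^ 2) * (σ ^ 2 * B ^ 2 - R ^ 2) :=
      mul_nonneg hs.le (by linarith)
    have t3 : 0 ≤ σ ^ 2 * (C ^ 2 - ((A - R) ^ 2 + (1 - σ ^ 2) * B ^ 2)) :=
      mul_nonneg (sq_nonneg σ) (by linarith)
    have hkey : σ ^ 2 * ((1 - σ ^ 2) * A ^ 2) ≤ σ ^ 2 * C ^ 2 := by nlinarith [t1, t2, t3]
    exact le_of_mul_le_mul_left hkey hσ2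

/-- Lemma 1, item 5: for any zero `z*` of `T`,
`‖z*-z̃‖ ≤ ‖z*-z‖/√(1-σ²)` and `‖z̃-z‖ ≤ ‖z*-z‖/√(1-σ²)`. -/
theorem stmt_4 {H : Type*} [NormedAddCommGroup H] [InnerProductSpace ℝ H] [CompleteSpace H]
    (T : Set (H × H)) (z ztilde v : H) (lam σ ε : ℝ)
    (hlam : 0 < lam) (hσ0 : 0 ≤ σ) (hσ1 : σ < 1) (hε : 0 ≤ ε)
    (henl : ∀ p ∈ T, ⟪ztilde - p.1, v - p.2⟫ ≥ -ε)
    (herr : ‖lam • v + ztilde - z‖ ^ 2 + 2 * lam * ε ≤ σ ^ 2 * ‖ztilde - z‖ ^ 2)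
    (zstar : H) (hzstar : (zstar, (0 : H)) ∈ T) :
    ‖zstar - ztilde‖ ≤ ‖zstar - z‖ / Real.sqrt (1 - σ ^ 2) ∧
    ‖ztilde - z‖ ≤ ‖zstar - z‖ / Real.sqrt (1 - σ ^ 2) := by
  have hs : 0 < 1 - σ ^ 2 := by nlinarith
  -- notation
  have h1 : ⟪ztilde - zstar, v - 0⟫ ≥ -ε := henl (zstar, 0) hzstar
  have h1' : ⟪zstar - ztilde, v⟫ ≤ ε := by
    have he : ztilde - zstar = -(zstar - ztilde) := by abel
    rw [he, sub_zero, inner_neg_left] at h1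
    linarith
  have hbr : ztilde - z = (lam • v + ztilde - z) - lam • v := by abel
  have h2 : ⟪zstar - ztilde, ztilde - z⟫
      = ⟪zstar - ztilde, lam • v + ztilde - z⟫ - lam * ⟪zstar - ztilde, v⟫ := by
    rw [hbr, inner_sub_right, real_inner_smul_right]
  have h3 : ⟪zstar - ztilde, lam • v + ztilde - z⟫
      ≥ -(‖zstar - ztilde‖ * ‖lam • v + ztilde - z‖) := by
    have := abs_real_inner_le_norm (zstar - ztilde) (lam • v + ztilde - z)
    have := neg_abs_le ⟪zstar - ztilde, lam • v + ztilde - z⟫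
    linarith
  have h4 : ‖zstar - z‖ ^ 2 = ‖zstar - ztilde‖ ^ 2
      + 2 * ⟪zstar - ztilde, ztilde - z⟫ + ‖ztilde - z‖ ^ 2 := by
    have hab : zstar - z = (zstar - ztilde) + (ztilde - z) := by abel
    rw [hab]
    exact norm_add_sq_real _ _
  have hmul : lam * ⟪zstar - ztilde, v⟫ ≤ lam * ε :=
    mul_le_mul_of_nonneg_left h1' hlam.le
  have hC : ‖zstar - ztilde‖ ^ 2 - 2 * (‖zstar - ztilde‖ * ‖lam • v + ztilde - z‖)
      + ‖ztilde - z‖ ^ 2 - 2 * (lam * ε) ≤ ‖zstar - z‖ ^ 2 := by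
    rw [h4]; linarith
  have hRB : ‖lam • v + ztilde - z‖ ^ 2 + 2 * (lam * ε) ≤ σ ^ 2 * ‖ztilde - z‖ ^ 2 := by
    linarith [herr]
  obtain ⟨k1, k2⟩ := aux_key ‖zstar - ztilde‖ ‖ztilde - z‖ ‖lam • v + ztilde - z‖
    ‖zstar - z‖ lam ε σ (norm_nonneg _) (norm_nonneg _) (norm_nonneg _) hσ0 hs
    (mul_nonneg hlam.le hε) hC hRB
  exact ⟨aux_div_sqrt _ _ _ (norm_nonneg _) (norm_nonneg _) hs k1,
    aux_div_sqrt _ _ _ (norm_nonneg _) (norm_nonneg _) hs k2⟩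
end

section
/- For every k ≥ 1 and every z* ∈ H with 0 ∈ T(z*), the r-HPE iterates satisfy ‖z* - z_{k-1}‖² ≥ ‖z* - z_k‖² + t_k(1-σ²)‖z̃_k - z_{k-1}‖²; in particular ‖z* - z_k‖ ≤ ‖z* - z_{k-1}‖. -/
open scoped RealInnerProductSpace

/-- Proposition 2, item 2: for every k ≥ 1 and every zero z* of T,
`‖z*-z_{k-1}‖² ≥ ‖z*-zₖ‖² + tₖ(1-σ²)‖z̃ₖ-z_{k-1}‖²`; in particular `‖z*-zₖ‖ ≤ ‖z*-z_{k-1}‖`. -/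
theorem stmt_6 {H : Type*} [NormedAddCommGroup H] [InnerProductSpace ℝ H] [CompleteSpace H]
    (T : Set (H × H)) (z ztilde v : ℕ → H) (eps lam t : ℕ → ℝ) (σ : ℝ)
    (hσ0 : 0 ≤ σ) (hσ1 : σ < 1)
    (heps : ∀ k ≥ 1, 0 ≤ eps k) (hlam : ∀ k ≥ 1, 0 < lam k)
    (ht : ∀ k ≥ 1, 0 < t k ∧ t k ≤ 1)
    (henl : ∀ k ≥ 1, ∀ p ∈ T, ⟪ztilde k - p.1, v k - p.2⟫ ≥ -(eps k))
    (herr : ∀ k ≥ 1, ‖lam k • v k + ztilde k - z (k - 1)‖ ^ 2 + 2 * lam k * eps k ≤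
      σ ^ 2 * ‖ztilde k - z (k - 1)‖ ^ 2)
    (hup : ∀ k ≥ 1, z k = z (k - 1) - (t k * lam k) • v k) :
    ∀ k ≥ 1, ∀ zstar : H, (zstar, (0 : H)) ∈ T →
      ‖zstar - z (k - 1)‖ ^ 2 ≥
        ‖zstar - z k‖ ^ 2 + t k * (1 - σ ^ 2) * ‖ztilde k - z (k - 1)‖ ^ 2 ∧
      ‖zstar - z k‖ ≤ ‖zstar - z (k - 1)‖ := by
  intro k hk zstar hz
  obtain ⟨ht0, ht1⟩ := ht k hk
  have hl := hlam k hk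
  have he := heps k hk
  have henl' := henl k hk (zstar, 0) hz
  have herr' := herr k hk
  have hup' := hup k hk
  set c := t k * lam k with hc
  set w := zstar - z (k - 1) with hw
  set d := ztilde k - z (k - 1) with hd
  have hz' : zstar - z k = w + c • v k := by
    rw [hup', hw]; abel
  have e1 : ‖zstar - z k‖ ^ 2 = ‖w‖ ^ 2 + 2 * c * ⟪w, v k⟫ + c ^ 2 * ‖v k‖ ^ 2 := by
    rw [hz', norm_add_sq_real, real_inner_smul_right, norm_smul]
    simp [mul_pow, sq_abs]
    ring
  have e2 : ‖lam k • v k + ztilde k - z (k - 1)‖ ^ 2 =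
      lam k ^ 2 * ‖v k‖ ^ 2 + 2 * lam k * ⟪v k, d⟫ + ‖d‖ ^ 2 := by
    rw [add_sub_assoc, ← hd, norm_add_sq_real, real_inner_smul_left, norm_smul]
    simp [mul_pow, sq_abs]
    ring
  have e3 : ⟪ztilde k - zstar, v k⟫ = ⟪v k, d⟫ - ⟪w, v k⟫ := by
    have : ztilde k - zstar = d - w := by rw [hd, hw]; abel
    rw [this, inner_sub_left, real_inner_comm]
  simp only [sub_zero] at henl'
  rw [e3] at henl'
  rw [e2] at herr'
  have hP : ⟪w, v k⟫ ≤ ⟪v k, d⟫ + eps k := by linarith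
  have h2 := mul_le_mul_of_nonneg_left herr' ht0.le
  have h3 := mul_le_mul_of_nonneg_left hP (by positivity : (0:ℝ) ≤ 2 * (t k * lam k))
  have h4 : 0 ≤ t k * lam k ^ 2 * ‖v k‖ ^ 2 * (1 - t k) :=
    mul_nonneg (mul_nonneg (mul_nonneg ht0.le (sq_nonneg (lam k))) (sq_nonneg ‖v k‖))
      (by linarith)
  have key : ‖zstar - z (k - 1)‖ ^ 2 ≥
      ‖zstar - z k‖ ^ 2 + t k * (1 - σ ^ 2) * ‖ztilde k - z (k - 1)‖ ^ 2 := by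
    rw [e1, ← hw, ← hd, hc]
    nlinarith [h2, h3, h4]
  refine ⟨key, ?_⟩
  have hB : 0 ≤ t k * (1 - σ ^ 2) * ‖ztilde k - z (k - 1)‖ ^ 2 := by
    have h1 : σ ^ 2 ≤ 1 := by nlinarith
    exact mul_nonneg (mul_nonneg ht0.le (by linarith)) (sq_nonneg _)
  nlinarith [norm_nonneg (zstar - z k), norm_nonneg (zstar - z (k - 1))]
end

section
/- For every k ≥ 1 and every z* ∈ H with 0 ∈ T(z*), the r-HPE iterates satisfy ‖z* - z₀‖² ≥ ‖z* - z_k‖² + (1-σ²) Σ_{j=1}^{k} t_j ‖z̃_j - z_{j-1}‖². -/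
open scoped RealInnerProductSpace

lemma hpe_step {H : Type*} [NormedAddCommGroup H] [InnerProductSpace ℝ H]
    (w d zt vv : H) (ε lm tt σ : ℝ) (hε : 0 ≤ ε) (hlm : 0 < lm)
    (ht0 : 0 < tt) (ht1 : tt ≤ 1)
    (henl : ⟪zt - w, vv⟫ ≥ -ε)
    (herr : ‖lm • vv + zt - d‖ ^ 2 + 2 * lm * ε ≤ σ ^ 2 * ‖zt - d‖ ^ 2) :
    ‖w - d‖ ^ 2 ≥ ‖w - (d - (tt * lm) • vv)‖ ^ 2 + (1 - σ ^ 2) * (tt * ‖zt - d‖ ^ 2) := by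
  have h1 : ‖w - (d - (tt * lm) • vv)‖ ^ 2
      = ‖w - d‖ ^ 2 + 2 * ((tt * lm) * ⟪w - d, vv⟫) + (tt * lm) ^ 2 * ‖vv‖ ^ 2 := by
    have h : w - (d - (tt * lm) • vv) = (w - d) + (tt * lm) • vv := by abel
    rw [h, norm_add_sq_real, real_inner_smul_right, norm_smul]
    simp [mul_pow, sq_abs]
  have h2 : ‖lm • vv + zt - d‖ ^ 2
      = lm ^ 2 * ‖vv‖ ^ 2 + 2 * (lm * ⟪vv, zt - d⟫) + ‖zt - d‖ ^ 2 := by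
    have h : lm • vv + zt - d = lm • vv + (zt - d) := by abel
    rw [h, norm_add_sq_real, real_inner_smul_left, norm_smul]
    simp [mul_pow, sq_abs]
  have h3 : ⟪w - d, vv⟫ = -⟪zt - w, vv⟫ + ⟪vv, zt - d⟫ := by
    rw [inner_sub_left, inner_sub_left, inner_sub_right,
      real_inner_comm vv zt, real_inner_comm vv d]
    ring
  rw [h1, h3]
  have hA : 0 ≤ ‖vv‖ ^ 2 := sq_nonneg _
  have hB : 0 ≤ ‖zt - d‖ ^ 2 := sq_nonneg _
  have htt : tt * tt ≤ tt := by nlinarith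
  nlinarith [mul_le_mul_of_nonneg_left herr ht0.le,
    mul_le_mul_of_nonneg_left henl (by positivity : (0:ℝ) ≤ 2 * tt * lm),
    mul_nonneg (mul_nonneg ht0.le hlm.le) hε,
    mul_nonneg (sub_nonneg.mpr htt) (mul_nonneg (mul_nonneg hlm.le hlm.le) hA)]

/-- Proposition 2, item 3: for every k ≥ 1 and every zero z* of T,
`‖z*-z₀‖² ≥ ‖z*-zₖ‖² + (1-σ²)∑_{j=1}^k tⱼ‖z̃ⱼ-z_{j-1}‖²`. -/
theorem stmt_7 {H : Type*} [NormedAddCommGroup H] [InnerProductSpace ℝ H] [CompleteSpace H]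
    (T : Set (H × H)) (z ztilde v : ℕ → H) (eps lam t : ℕ → ℝ) (σ : ℝ)
    (hσ0 : 0 ≤ σ) (hσ1 : σ < 1)
    (heps : ∀ k ≥ 1, 0 ≤ eps k) (hlam : ∀ k ≥ 1, 0 < lam k)
    (ht : ∀ k ≥ 1, 0 < t k ∧ t k ≤ 1)
    (henl : ∀ k ≥ 1, ∀ p ∈ T, ⟪ztilde k - p.1, v k - p.2⟫ ≥ -(eps k))
    (herr : ∀ k ≥ 1, ‖lam k • v k + ztilde k - z (k - 1)‖ ^ 2 + 2 * lam k * eps k ≤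
      σ ^ 2 * ‖ztilde k - z (k - 1)‖ ^ 2)
    (hup : ∀ k ≥ 1, z k = z (k - 1) - (t k * lam k) • v k) :
    ∀ k ≥ 1, ∀ zstar : H, (zstar, (0 : H)) ∈ T →
      ‖zstar - z 0‖ ^ 2 ≥ ‖zstar - z k‖ ^ 2 +
        (1 - σ ^ 2) * ∑ j ∈ Finset.Icc 1 k, t j * ‖ztilde j - z (j - 1)‖ ^ 2 := by
  have key : ∀ k ≥ 1, ∀ zstar : H, (zstar, (0 : H)) ∈ T →
      ‖zstar - z (k - 1)‖ ^ 2 ≥ ‖zstar - z k‖ ^ 2 +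
        (1 - σ ^ 2) * (t k * ‖ztilde k - z (k - 1)‖ ^ 2) := by
    intro k hk w hw
    have henl' := henl k hk (w, 0) hw
    simp only [sub_zero] at henl'
    have h := hpe_step w (z (k - 1)) (ztilde k) (v k) (eps k) (lam k) (t k) σ
      (heps k hk) (hlam k hk) (ht k hk).1 (ht k hk).2 henl' (herr k hk)
    rwa [← hup k hk] at h
  intro k hk w hw
  induction k with
  | zero => omega
  | succ n ih =>
    rcases Nat.eq_or_lt_of_le hk with h1 | h1
    · have h := key 1 le_rfl w hw
      simp only [← h1]
      simpa using h
    · have hn : 1 ≤ n := by omega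
      have ihn := ih hn
      have hstep := key (n + 1) (by omega) w hw
      simp only [Nat.add_sub_cancel] at hstep
      rw [Finset.sum_Icc_succ_top (by omega : 1 ≤ n + 1), mul_add]
      simp only [Nat.add_sub_cancel]
      linarith
end

section
/- For every k ≥ 1 and every z* ∈ H with 0 ∈ T(z*), the r-HPE iterates satisfy ‖z* - z̃_k‖ ≤ ‖z* - z_{k-1}‖/√(1-σ²) and ‖z̃_k - z_{k-1}‖ ≤ ‖z* - z_{k-1}‖/√(1-σ²). -/
open scoped RealInnerProductSpace

set_option maxHeartbeats 1000000 in
/-- Proposition 2, item 4: for every k ≥ 1 and every zero z* of T,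
`‖z*-z̃ₖ‖ ≤ ‖z*-z_{k-1}‖/√(1-σ²)` and `‖z̃ₖ-z_{k-1}‖ ≤ ‖z*-z_{k-1}‖/√(1-σ²)`. -/
theorem stmt_8 {H : Type*} [NormedAddCommGroup H] [InnerProductSpace ℝ H] [CompleteSpace H]
    (T : Set (H × H)) (z ztilde v : ℕ → H) (eps lam t : ℕ → ℝ) (σ : ℝ)
    (hσ0 : 0 ≤ σ) (hσ1 : σ < 1)
    (heps : ∀ k ≥ 1, 0 ≤ eps k) (hlam : ∀ k ≥ 1, 0 < lam k)
    (ht : ∀ k ≥ 1, 0 < t k ∧ t k ≤ 1)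
    (henl : ∀ k ≥ 1, ∀ p ∈ T, ⟪ztilde k - p.1, v k - p.2⟫ ≥ -(eps k))
    (herr : ∀ k ≥ 1, ‖lam k • v k + ztilde k - z (k - 1)‖ ^ 2 + 2 * lam k * eps k ≤
      σ ^ 2 * ‖ztilde k - z (k - 1)‖ ^ 2)
    (hup : ∀ k ≥ 1, z k = z (k - 1) - (t k * lam k) • v k) :
    ∀ k ≥ 1, ∀ zstar : H, (zstar, (0 : H)) ∈ T →
      ‖zstar - ztilde k‖ ≤ ‖zstar - z (k - 1)‖ / Real.sqrt (1 - σ ^ 2) ∧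
      ‖ztilde k - z (k - 1)‖ ≤ ‖zstar - z (k - 1)‖ / Real.sqrt (1 - σ ^ 2) := by
  intro k hk zstar hzs
  set s := zstar with hs
  set y := ztilde k with hy
  set x := z (k - 1) with hx
  set e := lam k • v k + ztilde k - z (k - 1) with he
  set a := ‖s - y‖ with ha
  set b := ‖y - x‖ with hb
  set c := ‖s - x‖ with hc
  set E := ‖e‖ with hE
  have ha0 : 0 ≤ a := norm_nonneg _
  have hb0 : 0 ≤ b := norm_nonneg _
  have hc0 : 0 ≤ c := norm_nonneg _
  have hE0 : 0 ≤ E := norm_nonneg _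
  have hσsq : 0 < 1 - σ ^ 2 := by nlinarith
  -- from enlargement
  have hmon : ⟪s - y, v k⟫ ≤ eps k := by
    have := henl k hk (zstar, 0) hzs
    simp only [sub_zero] at this
    have h2 : ⟪s - y, v k⟫ = -⟪y - s, v k⟫ := by
      rw [← inner_neg_left]; congr 1; abel
    rw [h2]
    linarith [this]
  have hL0 : 0 ≤ lam k * eps k := le_of_lt (hlam k hk) |>.trans_eq rfl |> fun h => mul_nonneg h (heps k hk)
  -- error bound
  have herrk : E ^ 2 + 2 * (lam k * eps k) ≤ σ ^ 2 * b ^ 2 := by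
    have := herr k hk
    simpa [hE, hb, mul_assoc] using this
  -- expansion
  have hexp : c ^ 2 = a ^ 2 + 2 * ⟪s - y, y - x⟫ + b ^ 2 := by
    have : s - x = (s - y) + (y - x) := by abel
    rw [hc, this, @norm_add_sq_real, ← ha, ← hb]
  have hyx : y - x = e - lam k • v k := by rw [he]; abel
  have hinner : ⟪s - y, y - x⟫ = ⟪s - y, e⟫ - lam k * ⟪s - y, v k⟫ := by
    rw [hyx, inner_sub_right, real_inner_smul_right]
  have hcs : -(a * E) ≤ ⟪s - y, e⟫ := by
    have := abs_real_inner_le_norm (s - y) e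
    have h2 := neg_abs_le (⟪s - y, e⟫ : ℝ)
    nlinarith [this, h2]
  have hsw : lam k * ⟪s - y, v k⟫ ≤ lam k * eps k :=
    mul_le_mul_of_nonneg_left hmon (le_of_lt (hlam k hk))
  -- key inequality: c² ≥ a² + b² - 2aE - 2λε
  have hkey : a ^ 2 + b ^ 2 - 2 * (a * E) - 2 * (lam k * eps k) ≤ c ^ 2 := by
    rw [hexp, hinner]
    nlinarith [hcs, hsw]
  have hE2 : E ^ 2 ≤ σ ^ 2 * b ^ 2 := by nlinarith
  -- bound 1 : (1-σ²) a² ≤ c²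
  have hmid : σ ^ 2 * a ^ 2 - 2 * (a * E) + E ^ 2 + (1 - σ ^ 2) * b ^ 2 ≤
      c ^ 2 - (1 - σ ^ 2) * a ^ 2 := by linarith [hkey, herrk]
  have h1 : (1 - σ ^ 2) * a ^ 2 ≤ c ^ 2 := by
    rcases eq_or_lt_of_le hσ0 with hσ | hσ
    · subst hσ
      have hEsq : E ^ 2 = 0 := le_antisymm (by nlinarith [hE2]) (sq_nonneg E)
      have hE00 : E = 0 := by
        exact pow_eq_zero_iff two_ne_zero |>.1 hEsq
      nlinarith [hmid, ha0, hE00.le, hE00.ge, sq_nonneg b]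
    · have hσp : 0 < σ ^ 2 := by positivity
      have hQ : 0 ≤ σ ^ 2 * a ^ 2 - 2 * (a * E) + E ^ 2 + (1 - σ ^ 2) * b ^ 2 := by
        nlinarith [sq_nonneg (σ ^ 2 * a - E), mul_nonneg hσsq.le (sub_nonneg.2 hE2), hσp]
      linarith [hmid, hQ]
  -- bound 2 : (1-σ²) b² ≤ c²
  have h2 : (1 - σ ^ 2) * b ^ 2 ≤ c ^ 2 := by
    nlinarith [sq_nonneg (a - E)]
  have hsq : ∀ u : ℝ, 0 ≤ u → (1 - σ ^ 2) * u ^ 2 ≤ c ^ 2 →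
      u ≤ c / Real.sqrt (1 - σ ^ 2) := by
    intro u hu hle
    rw [le_div_iff₀ (Real.sqrt_pos.2 hσsq)]
    have : (u * Real.sqrt (1 - σ ^ 2)) ^ 2 ≤ c ^ 2 := by
      rw [mul_pow, Real.sq_sqrt hσsq.le]
      linarith [hle]
    have h3 := Real.sqrt_le_sqrt this
    rwa [Real.sqrt_sq (mul_nonneg hu (Real.sqrt_nonneg _)), Real.sqrt_sq hc0] at h3
  exact ⟨hsq a ha0 h1, hsq b hb0 h2⟩
end

section
/- For every k ≥ 1, the ergodic iterates of the r-HPE method satisfy the inclusion v_k^a ∈ T^[ε_k^a](z̃_k^a), i.e. ⟪z̃_k^a - z', v_k^a - v'⟫ ≥ -ε_k^a for all (z',v') ∈ T (in particular ε_k^a ≥ 0 when T is maximal monotone). -/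
open scoped RealInnerProductSpace

/-- Theorem 3, first part: for every k ≥ 1 the ergodic iterates satisfy
`vₖᵃ ∈ T^[εₖᵃ](z̃ₖᵃ)`, i.e. `⟪z̃ₖᵃ - z', vₖᵃ - v'⟫ ≥ -εₖᵃ` for all (z',v') ∈ T;
in particular εₖᵃ ≥ 0 since T is maximal monotone. -/
theorem stmt_9 {H : Type*} [NormedAddCommGroup H] [InnerProductSpace ℝ H] [CompleteSpace H]
    (T : Set (H × H)) (z ztilde v : ℕ → H) (eps lam t : ℕ → ℝ) (σ : ℝ)
    (hσ0 : 0 ≤ σ) (hσ1 : σ < 1)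
    (heps : ∀ k ≥ 1, 0 ≤ eps k) (hlam : ∀ k ≥ 1, 0 < lam k)
    (ht : ∀ k ≥ 1, 0 < t k ∧ t k ≤ 1)
    (henl : ∀ k ≥ 1, ∀ p ∈ T, ⟪ztilde k - p.1, v k - p.2⟫ ≥ -(eps k))
    (herr : ∀ k ≥ 1, ‖lam k • v k + ztilde k - z (k - 1)‖ ^ 2 + 2 * lam k * eps k ≤
      σ ^ 2 * ‖ztilde k - z (k - 1)‖ ^ 2)
    (hup : ∀ k ≥ 1, z k = z (k - 1) - (t k * lam k) • v k)
    (Lam : ℕ → ℝ) (hLam : ∀ k, Lam k = ∑ i ∈ Finset.Icc 1 k, t i * lam i)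
    (za va : ℕ → H) (ea : ℕ → ℝ)
    (hza : ∀ k, za k = (Lam k)⁻¹ • ∑ i ∈ Finset.Icc 1 k, (t i * lam i) • ztilde i)
    (hva : ∀ k, va k = (Lam k)⁻¹ • ∑ i ∈ Finset.Icc 1 k, (t i * lam i) • v i)
    (hea : ∀ k, ea k = (Lam k)⁻¹ *
      ∑ i ∈ Finset.Icc 1 k, t i * lam i * (eps i + ⟪ztilde i - za k, v i - va k⟫))
    (hmono : ∀ p ∈ T, ∀ q ∈ T, ⟪p.1 - q.1, p.2 - q.2⟫ ≥ 0)
    (hmax : ∀ p : H × H, (∀ q ∈ T, ⟪p.1 - q.1, p.2 - q.2⟫ ≥ 0) → p ∈ T) :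
    ∀ k ≥ 1, (∀ p ∈ T, ⟪za k - p.1, va k - p.2⟫ ≥ -(ea k)) ∧ 0 ≤ ea k := by
  intro k hk
  set S := Finset.Icc 1 k with hS
  have hα : ∀ i ∈ S, 0 < t i * lam i := by
    intro i hi
    rw [hS, Finset.mem_Icc] at hi
    exact mul_pos (ht i hi.1).1 (hlam i hi.1)
  have hΛpos : 0 < Lam k := by
    rw [hLam]
    exact Finset.sum_pos hα ⟨1, by simp only [Finset.mem_Icc]; omega⟩
  have hΛne : Lam k ≠ 0 := ne_of_gt hΛpos
  have hz : ∑ i ∈ S, (t i * lam i) • ztilde i = Lam k • za k := by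
    rw [hza, smul_smul, mul_inv_cancel₀ hΛne, one_smul]
  have hv : ∑ i ∈ S, (t i * lam i) • v i = Lam k • va k := by
    rw [hva, smul_smul, mul_inv_cancel₀ hΛne, one_smul]
  have key : ∀ p₁ p₂ : H, ∑ i ∈ S, (t i * lam i) * ⟪ztilde i - p₁, v i - p₂⟫
      = (∑ i ∈ S, (t i * lam i) * ⟪ztilde i - za k, v i - va k⟫)
        + Lam k * ⟪za k - p₁, va k - p₂⟫ := by
    intro p₁ p₂
    have expand : ∀ i, ⟪ztilde i - p₁, v i - p₂⟫
        = ⟪ztilde i - za k, v i - va k⟫ + ⟪ztilde i - za k, va k - p₂⟫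
          + ⟪za k - p₁, v i - va k⟫ + ⟪za k - p₁, va k - p₂⟫ := by
      intro i
      have h1 : ztilde i - p₁ = (ztilde i - za k) + (za k - p₁) := by abel
      have h2 : v i - p₂ = (v i - va k) + (va k - p₂) := by abel
      rw [h1, h2, inner_add_left, inner_add_right, inner_add_right]
      ring
    have hzero1 : ∑ i ∈ S, (t i * lam i) • (ztilde i - za k) = 0 := by
      have : ∑ i ∈ S, (t i * lam i) • (ztilde i - za k)
          = (∑ i ∈ S, (t i * lam i) • ztilde i) - (∑ i ∈ S, t i * lam i) • za k := by
        rw [Finset.sum_smul]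
        rw [← Finset.sum_sub_distrib]
        exact Finset.sum_congr rfl fun i _ => smul_sub _ _ _
      rw [this, hz, ← hLam, sub_self]
    have hzero2 : ∑ i ∈ S, (t i * lam i) • (v i - va k) = 0 := by
      have : ∑ i ∈ S, (t i * lam i) • (v i - va k)
          = (∑ i ∈ S, (t i * lam i) • v i) - (∑ i ∈ S, t i * lam i) • va k := by
        rw [Finset.sum_smul]
        rw [← Finset.sum_sub_distrib]
        exact Finset.sum_congr rfl fun i _ => smul_sub _ _ _
      rw [this, hv, ← hLam, sub_self]
    have hB : ∑ i ∈ S, (t i * lam i) * ⟪ztilde i - za k, va k - p₂⟫ = 0 := by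
      have : ∑ i ∈ S, (t i * lam i) * ⟪ztilde i - za k, va k - p₂⟫
          = ⟪∑ i ∈ S, (t i * lam i) • (ztilde i - za k), va k - p₂⟫ := by
        rw [sum_inner]
        exact Finset.sum_congr rfl fun i _ => (real_inner_smul_left _ _ _).symm
      rw [this, hzero1, inner_zero_left]
    have hC : ∑ i ∈ S, (t i * lam i) * ⟪za k - p₁, v i - va k⟫ = 0 := by
      have : ∑ i ∈ S, (t i * lam i) * ⟪za k - p₁, v i - va k⟫
          = ⟪za k - p₁, ∑ i ∈ S, (t i * lam i) • (v i - va k)⟫ := by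
        rw [inner_sum]
        exact Finset.sum_congr rfl fun i _ => (real_inner_smul_right _ _ _).symm
      rw [this, hzero2, inner_zero_right]
    calc ∑ i ∈ S, (t i * lam i) * ⟪ztilde i - p₁, v i - p₂⟫
        = ∑ i ∈ S, ((t i * lam i) * ⟪ztilde i - za k, v i - va k⟫
            + (t i * lam i) * ⟪ztilde i - za k, va k - p₂⟫
            + (t i * lam i) * ⟪za k - p₁, v i - va k⟫
            + (t i * lam i) * ⟪za k - p₁, va k - p₂⟫) := by
          refine Finset.sum_congr rfl fun i _ => ?_
          rw [expand i]; ring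
      _ = (∑ i ∈ S, (t i * lam i) * ⟪ztilde i - za k, v i - va k⟫)
            + (∑ i ∈ S, (t i * lam i) * ⟪ztilde i - za k, va k - p₂⟫)
            + (∑ i ∈ S, (t i * lam i) * ⟪za k - p₁, v i - va k⟫)
            + (∑ i ∈ S, (t i * lam i) * ⟪za k - p₁, va k - p₂⟫) := by
          simp [Finset.sum_add_distrib]
      _ = (∑ i ∈ S, (t i * lam i) * ⟪ztilde i - za k, v i - va k⟫)
            + Lam k * ⟪za k - p₁, va k - p₂⟫ := by
          rw [hB, hC, ← Finset.sum_mul, ← hLam]; ring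
  have hea' : Lam k * ea k = ∑ i ∈ S, t i * lam i * (eps i + ⟪ztilde i - za k, v i - va k⟫) := by
    rw [hea, ← mul_assoc, mul_inv_cancel₀ hΛne, one_mul]
  have main : ∀ p ∈ T, ⟪za k - p.1, va k - p.2⟫ ≥ -(ea k) := by
    intro p hp
    have hterm : ∀ i ∈ S, 0 ≤ t i * lam i * (eps i + ⟪ztilde i - p.1, v i - p.2⟫) := by
      intro i hi
      rw [hS, Finset.mem_Icc] at hi
      have := henl i hi.1 p hp
      have h2 : 0 ≤ eps i + ⟪ztilde i - p.1, v i - p.2⟫ := by linarith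
      exact mul_nonneg (le_of_lt (mul_pos (ht i hi.1).1 (hlam i hi.1))) h2
    have hsum : 0 ≤ ∑ i ∈ S, t i * lam i * (eps i + ⟪ztilde i - p.1, v i - p.2⟫) :=
      Finset.sum_nonneg hterm
    have heq : ∑ i ∈ S, t i * lam i * (eps i + ⟪ztilde i - p.1, v i - p.2⟫)
        = Lam k * (ea k + ⟪za k - p.1, va k - p.2⟫) := by
      have : ∑ i ∈ S, t i * lam i * (eps i + ⟪ztilde i - p.1, v i - p.2⟫)
          = (∑ i ∈ S, t i * lam i * eps i)
            + ∑ i ∈ S, t i * lam i * ⟪ztilde i - p.1, v i - p.2⟫ := by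
        rw [← Finset.sum_add_distrib]
        exact Finset.sum_congr rfl fun i _ => by ring
      rw [this, key p.1 p.2]
      have : ∑ i ∈ S, t i * lam i * (eps i + ⟪ztilde i - za k, v i - va k⟫)
          = (∑ i ∈ S, t i * lam i * eps i)
            + ∑ i ∈ S, t i * lam i * ⟪ztilde i - za k, v i - va k⟫ := by
        rw [← Finset.sum_add_distrib]
        exact Finset.sum_congr rfl fun i _ => by ring
      rw [mul_add, hea', this]
      ring
    rw [heq] at hsum
    nlinarith [hΛpos]
  refine ⟨main, ?_⟩
  by_contra hneg
  push_neg at hneg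
  have hmem : (za k, va k) ∈ T := by
    apply hmax
    intro q hq
    have := main q hq
    simp only [ge_iff_le] at this ⊢
    linarith
  have := main (za k, va k) hmem
  simp only [sub_self, inner_zero_left] at this
  linarith
end

section
/- If the solution set T⁻¹(0) = {z : 0 ∈ T(z)} is nonempty and d₀ denotes the distance from z₀ to T⁻¹(0), then for every k ≥ 1 the ergodic residual satisfies ‖v_k^a‖ ≤ 2d₀/Λ_k. -/
open scoped RealInnerProductSpace

set_option maxHeartbeats 1000000

/-- Theorem 3, residual bound: if T⁻¹(0) ≠ ∅ and d₀ is the distance from z₀ to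
T⁻¹(0), then `‖vₖᵃ‖ ≤ 2d₀/Λₖ` for every k ≥ 1. -/
theorem stmt_10 {H : Type*} [NormedAddCommGroup H] [InnerProductSpace ℝ H] [CompleteSpace H]
    (T : Set (H × H)) (z ztilde v : ℕ → H) (eps lam t : ℕ → ℝ) (σ : ℝ)
    (hσ0 : 0 ≤ σ) (hσ1 : σ < 1)
    (heps : ∀ k ≥ 1, 0 ≤ eps k) (hlam : ∀ k ≥ 1, 0 < lam k)
    (ht : ∀ k ≥ 1, 0 < t k ∧ t k ≤ 1)
    (henl : ∀ k ≥ 1, ∀ p ∈ T, ⟪ztilde k - p.1, v k - p.2⟫ ≥ -(eps k))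
    (herr : ∀ k ≥ 1, ‖lam k • v k + ztilde k - z (k - 1)‖ ^ 2 + 2 * lam k * eps k ≤
      σ ^ 2 * ‖ztilde k - z (k - 1)‖ ^ 2)
    (hup : ∀ k ≥ 1, z k = z (k - 1) - (t k * lam k) • v k)
    (Lam : ℕ → ℝ) (hLam : ∀ k, Lam k = ∑ i ∈ Finset.Icc 1 k, t i * lam i)
    (va : ℕ → H)
    (hva : ∀ k, va k = (Lam k)⁻¹ • ∑ i ∈ Finset.Icc 1 k, (t i * lam i) • v i)
    (hsol : {x : H | (x, (0 : H)) ∈ T}.Nonempty)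
    (d0 : ℝ) (hd0 : d0 = Metric.infDist (z 0) {x : H | (x, (0 : H)) ∈ T}) :
    ∀ k ≥ 1, ‖va k‖ ≤ 2 * d0 / Lam k := by
  intro k hk
  set S : Set H := {x : H | (x, (0 : H)) ∈ T} with hS
  -- Fejér monotonicity
  have fejer : ∀ y ∈ S, ∀ j : ℕ, ‖z j - y‖ ≤ ‖z 0 - y‖ := by
    intro y hy j
    induction j with
    | zero => exact le_refl _
    | succ n ih =>
      have hn1 : 1 ≤ n + 1 := Nat.le_add_left 1 n
      have hlamp := hlam (n+1) hn1
      obtain ⟨ht0, ht1⟩ := ht (n+1) hn1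
      have hep := heps (n+1) hn1
      have hzn : z (n+1) = z n - (t (n+1) * lam (n+1)) • v (n+1) := by
        have h := hup (n+1) hn1
        simpa using h
      have hipy : ⟪ztilde (n+1) - y, v (n+1)⟫ ≥ -(eps (n+1)) := by
        have h := henl (n+1) hn1 (y, 0) hy
        simpa using h
      have herr' := herr (n+1) hn1
      simp only [Nat.add_sub_cancel] at herr'
      set l := lam (n+1) with hl
      set w := v (n+1) with hw
      set u := ztilde (n+1) - z n with hu
      have hrw : l • w + ztilde (n+1) - z n = l • w + u := by rw [hu]; abel
      rw [hrw] at herr'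
      have hexp : ‖l • w + u‖ ^ 2 = l^2 * ‖w‖^2 + 2 * (l * ⟪w, u⟫) + ‖u‖^2 := by
        rw [norm_add_sq_real, real_inner_smul_left, norm_smul, mul_pow,
          Real.norm_eq_abs, sq_abs]
      rw [hexp] at herr'
      have hu2 : ⟪w, u⟫ = -⟪w, z n - ztilde (n+1)⟫ := by
        rw [hu, ← inner_neg_right]; congr 1; abel
      rw [hu2] at herr'
      have hσ2 : σ^2 ≤ 1 := by nlinarith
      have hA : l^2 * ‖w‖^2 + 2 * l * eps (n+1) ≤ 2 * l * ⟪w, z n - ztilde (n+1)⟫ := by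
        have hun : (0:ℝ) ≤ ‖u‖^2 := sq_nonneg _
        have hc : σ^2 * ‖u‖^2 ≤ 1 * ‖u‖^2 := mul_le_mul_of_nonneg_right hσ2 hun
        nlinarith [herr', hc]
      have hsplit : ⟪w, z n - y⟫ = ⟪w, z n - ztilde (n+1)⟫ + ⟪w, ztilde (n+1) - y⟫ := by
        rw [← inner_add_right]; congr 1; abel
      have hipy' : ⟪w, ztilde (n+1) - y⟫ ≥ -(eps (n+1)) := by
        rwa [real_inner_comm]
      have hB : l * ‖w‖^2 ≤ 2 * ⟪w, z n - y⟫ := by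
        have hm : 2 * l * (-(eps (n+1))) ≤ 2 * l * ⟪w, ztilde (n+1) - y⟫ :=
          mul_le_mul_of_nonneg_left hipy' (by positivity)
        have hsplit' : 2 * l * ⟪w, z n - y⟫
            = 2 * l * ⟪w, z n - ztilde (n+1)⟫ + 2 * l * ⟪w, ztilde (n+1) - y⟫ := by
          rw [hsplit]; ring
        have h2 : l^2 * ‖w‖^2 ≤ 2 * l * ⟪w, z n - y⟫ := by linarith [hA, hm, hsplit']
        have h2' : l * (l * ‖w‖^2) ≤ l * (2 * ⟪w, z n - y⟫) := by linarith [h2]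
        exact le_of_mul_le_mul_left h2' hlamp
      have hip0 : 0 ≤ ⟪w, z n - y⟫ := by
        have := mul_nonneg hlamp.le (sq_nonneg ‖w‖); linarith
      have hnorm : ‖z (n+1) - y‖^2
          = ‖z n - y‖^2 - 2 * ((t (n+1) * l) * ⟪w, z n - y⟫) + (t (n+1) * l)^2 * ‖w‖^2 := by
        have hz2 : z (n+1) - y = (z n - y) - (t (n+1) * l) • w := by rw [hzn]; abel
        rw [hz2, norm_sub_sq_real, real_inner_smul_right, norm_smul, mul_pow,
          Real.norm_eq_abs, sq_abs, real_inner_comm]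
      have hsq : ‖z (n+1) - y‖^2 ≤ ‖z n - y‖^2 := by
        rw [hnorm]
        have c1 : t (n+1) * t (n+1) * l * (l * ‖w‖^2)
            ≤ t (n+1) * t (n+1) * l * (2 * ⟪w, z n - y⟫) :=
          mul_le_mul_of_nonneg_left hB (by positivity)
        have ct : t (n+1) * t (n+1) * l ≤ t (n+1) * l := by
          have := mul_le_mul_of_nonneg_right ht1 (mul_pos ht0 hlamp).le
          nlinarith [this]
        have c2 : t (n+1) * t (n+1) * l * (2 * ⟪w, z n - y⟫)
            ≤ t (n+1) * l * (2 * ⟪w, z n - y⟫) :=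
          mul_le_mul_of_nonneg_right ct (by positivity)
        nlinarith [c1, c2]
      have hmono : ‖z (n+1) - y‖ ≤ ‖z n - y‖ := by
        nlinarith [norm_nonneg (z (n+1) - y), norm_nonneg (z n - y)]
      exact hmono.trans ih
  -- telescoping
  have tel : ∀ j : ℕ, z j = z 0 - ∑ i ∈ Finset.Icc 1 j, (t i * lam i) • v i := by
    intro j
    induction j with
    | zero => simp
    | succ n ih =>
      rw [Finset.sum_Icc_succ_top (Nat.le_add_left 1 n)]
      have h := hup (n+1) (Nat.le_add_left 1 n)
      simp only [Nat.add_sub_cancel] at h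
      rw [h, ih]; abel
  have hΛ : 0 < Lam k := by
    rw [hLam]
    apply Finset.sum_pos
    · intro i hi
      obtain ⟨hi1, _⟩ := Finset.mem_Icc.mp hi
      exact mul_pos (ht i hi1).1 (hlam i hi1)
    · exact ⟨1, Finset.mem_Icc.mpr ⟨le_refl 1, hk⟩⟩
  have hva' : va k = (Lam k)⁻¹ • (z 0 - z k) := by
    rw [hva k, tel k]; congr 1; abel
  have hnva : ‖va k‖ = (Lam k)⁻¹ * ‖z 0 - z k‖ := by
    rw [hva', norm_smul, Real.norm_eq_abs, abs_of_pos (inv_pos.mpr hΛ)]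
  have hbound : ‖z 0 - z k‖ ≤ 2 * d0 := by
    rw [hd0]
    have hle : ‖z 0 - z k‖ / 2 ≤ Metric.infDist (z 0) S := by
      by_contra hcon
      push_neg at hcon
      obtain ⟨y, hy, hdy⟩ := (Metric.infDist_lt_iff hsol).mp hcon
      rw [dist_eq_norm] at hdy
      have h1 := fejer y hy k
      have h2 : ‖z 0 - z k‖ ≤ ‖z 0 - y‖ + ‖z k - y‖ := by
        have he : z 0 - z k = (z 0 - y) - (z k - y) := by abel
        rw [he]; exact norm_sub_le _ _
      linarith
    linarith
  rw [hnva, div_eq_inv_mul]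
  exact mul_le_mul_of_nonneg_left hbound (inv_pos.mpr hΛ).le
end

section
/- For every k ≥ 1, the r-HPE iterate z_k is the unique minimizer over H of z ↦ Γ_k(z) + (1/2)‖z - z₀‖², and min_{z ∈ H} [ Γ_k(z) + (1/2)‖z - z₀‖² ] ≥ 0, where Γ_k(z) = Σ_{j=1}^k t_j λ_j γ_j(z) and γ_j(z) = ⟪z - z̃_j, v_j⟫ - ε_j. -/
open scoped RealInnerProductSpace

set_option maxHeartbeats 1000000

lemma quad_id_aux {H : Type*} [NormedAddCommGroup H] [InnerProductSpace ℝ H]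
    (z0 zk w S : H) (h : zk - z0 = -S) :
    ⟪w - zk, S⟫ + ‖w - z0‖ ^ 2 / 2 - ‖zk - z0‖ ^ 2 / 2 = ‖w - zk‖ ^ 2 / 2 := by
  have hw : w - z0 = (w - zk) - S := by
    have h2 : w - z0 = (w - zk) + (zk - z0) := by abel
    rw [h2, h]; abel
  have h1 : ‖(w - zk) - S‖ ^ 2 = ‖w - zk‖ ^ 2 - 2 * ⟪w - zk, S⟫ + ‖S‖ ^ 2 :=
    norm_sub_sq_real _ _
  have h2 : ‖zk - z0‖ ^ 2 = ‖S‖ ^ 2 := by rw [h, norm_neg]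
  rw [hw, h1, h2]; ring

/-- For every k ≥ 1, the r-HPE iterate zₖ is the unique minimizer over H of
`z ↦ Γₖ(z) + (1/2)‖z-z₀‖²`, and the minimum value is ≥ 0, where
`Γₖ(z) = ∑_{j=1}^k tⱼλⱼγⱼ(z)` and `γⱼ(z) = ⟪z-z̃ⱼ, vⱼ⟫ - εⱼ`. -/
theorem stmt_12 {H : Type*} [NormedAddCommGroup H] [InnerProductSpace ℝ H] [CompleteSpace H]
    (T : Set (H × H)) (z ztilde v : ℕ → H) (eps lam t : ℕ → ℝ) (σ : ℝ)
    (hσ0 : 0 ≤ σ) (hσ1 : σ < 1)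
    (heps : ∀ k ≥ 1, 0 ≤ eps k) (hlam : ∀ k ≥ 1, 0 < lam k)
    (ht : ∀ k ≥ 1, 0 < t k ∧ t k ≤ 1)
    (henl : ∀ k ≥ 1, ∀ p ∈ T, ⟪ztilde k - p.1, v k - p.2⟫ ≥ -(eps k))
    (herr : ∀ k ≥ 1, ‖lam k • v k + ztilde k - z (k - 1)‖ ^ 2 + 2 * lam k * eps k ≤
      σ ^ 2 * ‖ztilde k - z (k - 1)‖ ^ 2)
    (hup : ∀ k ≥ 1, z k = z (k - 1) - (t k * lam k) • v k)
    (γ : ℕ → H → ℝ) (hγ : ∀ j, ∀ w : H, γ j w = ⟪w - ztilde j, v j⟫ - eps j)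
    (Γ : ℕ → H → ℝ) (hΓ : ∀ k, ∀ w : H, Γ k w = ∑ j ∈ Finset.Icc 1 k, t j * lam j * γ j w) :
    ∀ k ≥ 1,
      (∀ w : H, Γ k (z k) + ‖z k - z 0‖ ^ 2 / 2 ≤ Γ k w + ‖w - z 0‖ ^ 2 / 2) ∧
      (∀ w : H, Γ k w + ‖w - z 0‖ ^ 2 / 2 = Γ k (z k) + ‖z k - z 0‖ ^ 2 / 2 → w = z k) ∧
      0 ≤ Γ k (z k) + ‖z k - z 0‖ ^ 2 / 2 := by
  -- z k - z 0 = -(partial sum)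
  have hz : ∀ k, z k - z 0 = -∑ j ∈ Finset.Icc 1 k, (t j * lam j) • v j := by
    intro k
    induction k with
    | zero => simp
    | succ n ih =>
      have h1 : z (n + 1) = z n - (t (n+1) * lam (n+1)) • v (n+1) := by
        have := hup (n+1) (Nat.le_add_left 1 n)
        simpa using this
      rw [Finset.sum_Icc_succ_top (Nat.le_add_left 1 n), h1]
      rw [neg_add, ← ih]; abel
  -- key identity
  have key : ∀ k, ∀ w : H,
      Γ k w + ‖w - z 0‖ ^ 2 / 2 =
        (Γ k (z k) + ‖z k - z 0‖ ^ 2 / 2) + ‖w - z k‖ ^ 2 / 2 := by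
    intro k w
    have hΓd : Γ k w - Γ k (z k) = ⟪w - z k, ∑ j ∈ Finset.Icc 1 k, (t j * lam j) • v j⟫ := by
      rw [hΓ, hΓ, ← Finset.sum_sub_distrib, inner_sum]
      refine Finset.sum_congr rfl fun j _ => ?_
      rw [hγ, hγ, real_inner_smul_right]
      have h3 : ⟪w - ztilde j, v j⟫ - ⟪z k - ztilde j, v j⟫ = ⟪w - z k, v j⟫ := by
        rw [← inner_sub_left]; congr 1; abel
      rw [← h3]; ring
    have := quad_id_aux (z 0) (z k) w (∑ j ∈ Finset.Icc 1 k, (t j * lam j) • v j) (hz k)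
    linarith [hΓd, this]
  -- nonnegativity of the minimum, by induction
  have hnn : ∀ k, 0 ≤ Γ k (z k) + ‖z k - z 0‖ ^ 2 / 2 := by
    intro k
    induction k with
    | zero => simp [hΓ]
    | succ n ih =>
      have hk1 : (1:ℕ) ≤ n + 1 := Nat.le_add_left 1 n
      have hΓs : ∀ w : H, Γ (n+1) w = Γ n w + t (n+1) * lam (n+1) * γ (n+1) w := by
        intro w; rw [hΓ, hΓ, Finset.sum_Icc_succ_top hk1]
      have h1 : z (n + 1) = z n - (t (n+1) * lam (n+1)) • v (n+1) := by
        simpa using hup (n+1) hk1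
      have hkey := key n (z (n+1))
      -- the quadratic/γ term is nonnegative
      set a := z n with ha
      set u := ztilde (n+1)
      set vv := v (n+1)
      set lm := lam (n+1)
      set tt := t (n+1)
      set ee := eps (n+1)
      have herr' : ‖lm • vv + u - a‖ ^ 2 + 2 * lm * ee ≤ σ ^ 2 * ‖u - a‖ ^ 2 := by
        simpa using herr (n+1) hk1
      have hexp : ‖lm • vv + u - a‖ ^ 2 =
          lm ^ 2 * ‖vv‖ ^ 2 + 2 * (lm * ⟪vv, u - a⟫) + ‖u - a‖ ^ 2 := by
        have : lm • vv + u - a = lm • vv + (u - a) := by abel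
        rw [this, norm_add_sq_real, real_inner_smul_left, norm_smul]
        simp only [mul_pow, sq_abs, Real.norm_eq_abs]
      have hγv : γ (n+1) (z (n+1)) = ⟪a - u, vv⟫ - tt * lm * ‖vv‖ ^ 2 - ee := by
        rw [hγ, h1]
        have : a - (tt * lm) • vv - u = (a - u) - (tt * lm) • vv := by abel
        rw [this, inner_sub_left, real_inner_smul_left, real_inner_self_eq_norm_sq]
      have hnz : ‖z (n+1) - a‖ ^ 2 = tt ^ 2 * lm ^ 2 * ‖vv‖ ^ 2 := by
        rw [h1]
        have : a - (tt * lm) • vv - a = -((tt * lm) • vv) := by abel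
        rw [this, norm_neg, norm_smul]
        simp only [mul_pow, sq_abs, Real.norm_eq_abs]
      have hsym : ⟪vv, u - a⟫ = -⟪a - u, vv⟫ := by
        rw [real_inner_comm]
        have : u - a = -(a - u) := by abel
        rw [this, inner_neg_left]
      have hlm : 0 < lm := hlam (n+1) hk1
      have htt := ht (n+1) hk1
      have hσ2 : σ ^ 2 ≤ 1 := by nlinarith
      have hN : (0:ℝ) ≤ ‖vv‖ ^ 2 := sq_nonneg _
      have hM : (0:ℝ) ≤ ‖u - a‖ ^ 2 := sq_nonneg _
      -- λ ⟪a-u,v⟫ - λ ε ≥ λ² ‖v‖² / 2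
      have hcross : σ ^ 2 * ‖u - a‖ ^ 2 ≤ ‖u - a‖ ^ 2 := mul_le_of_le_one_left hM hσ2
      have hstep : lm * (⟪a - u, vv⟫ - ee) ≥ lm ^ 2 * ‖vv‖ ^ 2 / 2 := by
        rw [hexp, hsym] at herr'
        linarith
      have hineq : 0 ≤ tt * lm * γ (n+1) (z (n+1)) + ‖z (n+1) - a‖ ^ 2 / 2 := by
        rw [hγv, hnz]
        have e1 : tt * (lm ^ 2 * ‖vv‖ ^ 2 / 2) ≤ tt * (lm * (⟪a - u, vv⟫ - ee)) :=
          mul_le_mul_of_nonneg_left hstep htt.1.le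
        have e2 : tt ^ 2 ≤ tt := by nlinarith [htt.1, htt.2]
        have e3 : tt ^ 2 * (lm ^ 2 * ‖vv‖ ^ 2 / 2) ≤ tt * (lm ^ 2 * ‖vv‖ ^ 2 / 2) :=
          mul_le_mul_of_nonneg_right e2 (by positivity)
        nlinarith [e1, e3]
      have := hΓs (z (n+1))
      linarith [hkey, ih, hineq, this]
  intro k hk
  refine ⟨fun w => ?_, fun w hw => ?_, hnn k⟩
  · have hkw := key k w
    have h4 := sq_nonneg ‖w - z k‖
    linarith
  · have hkw := key k w
    have h0 : ‖w - z k‖ ^ 2 = 0 := by linarith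
    have h5 : ‖w - z k‖ = 0 := by
      exact (pow_eq_zero_iff (two_ne_zero)).mp h0
    have h6 := norm_eq_zero.mp h5
    rwa [sub_eq_zero] at h6
end

section
/- Assume the large-step condition λ_k‖z̃_k - z_{k-1}‖ ≥ η > 0 and t_k ≥ τ > 0 for all k ≥ 1, that T⁻¹(0) = {z : 0 ∈ T(z)} is nonempty, and that the distance d₀ from z₀ to T⁻¹(0) is positive. Then for every k ≥ 1 the aggregate stepsize satisfies Λ_k ≥ (τk)^{3/2} η √(1-σ²) / d₀. -/
open scoped RealInnerProductSpace

set_option maxHeartbeats 1000000 in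
/-- Under the large-step condition `λₖ‖z̃ₖ-z_{k-1}‖ ≥ η > 0`, `tₖ ≥ τ > 0`, with
T⁻¹(0) ≠ ∅ and 0 < d₀ = dist(z₀, T⁻¹(0)), one has `Λₖ ≥ (τk)^{3/2}η√(1-σ²)/d₀`. -/
theorem stmt_13 {H : Type*} [NormedAddCommGroup H] [InnerProductSpace ℝ H] [CompleteSpace H]
    (T : Set (H × H)) (z ztilde v : ℕ → H) (eps lam t : ℕ → ℝ) (σ : ℝ)
    (hσ0 : 0 ≤ σ) (hσ1 : σ < 1)
    (heps : ∀ k ≥ 1, 0 ≤ eps k) (hlam : ∀ k ≥ 1, 0 < lam k)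
    (ht : ∀ k ≥ 1, 0 < t k ∧ t k ≤ 1)
    (henl : ∀ k ≥ 1, ∀ p ∈ T, ⟪ztilde k - p.1, v k - p.2⟫ ≥ -(eps k))
    (herr : ∀ k ≥ 1, ‖lam k • v k + ztilde k - z (k - 1)‖ ^ 2 + 2 * lam k * eps k ≤
      σ ^ 2 * ‖ztilde k - z (k - 1)‖ ^ 2)
    (hup : ∀ k ≥ 1, z k = z (k - 1) - (t k * lam k) • v k)
    (Lam : ℕ → ℝ) (hLam : ∀ k, Lam k = ∑ i ∈ Finset.Icc 1 k, t i * lam i)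
    (η τ : ℝ) (hη : 0 < η) (hτ : 0 < τ)
    (hls : ∀ k ≥ 1, η ≤ lam k * ‖ztilde k - z (k - 1)‖)
    (htτ : ∀ k ≥ 1, τ ≤ t k)
    (hsol : {x : H | (x, (0 : H)) ∈ T}.Nonempty)
    (d0 : ℝ) (hd0 : d0 = Metric.infDist (z 0) {x : H | (x, (0 : H)) ∈ T})
    (hd0pos : 0 < d0) :
    ∀ k ≥ 1, Lam k ≥ (τ * k) ^ ((3 : ℝ) / 2) * η * Real.sqrt (1 - σ ^ 2) / d0 := by
  have hσ2 : 0 < 1 - σ ^ 2 := by nlinarith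
  -- key descent inequality
  have key : ∀ zs, (zs, (0 : H)) ∈ T → ∀ i ≥ 1,
      t i * ((1 - σ ^ 2) * ‖ztilde i - z (i - 1)‖ ^ 2) ≤
        ‖z (i - 1) - zs‖ ^ 2 - ‖z i - zs‖ ^ 2 := by
    intro zs hzs i hi
    obtain ⟨ht1, ht2⟩ := ht i hi
    have hli := hlam i hi
    have hei := heps i hi
    have henli := henl i hi (zs, 0) hzs
    simp only [sub_zero] at henli
    have herri := herr i hi
    have E1 : ‖lam i • v i + ztilde i - z (i - 1)‖ ^ 2 =
        (lam i) ^ 2 * ‖v i‖ ^ 2 + 2 * lam i * ⟪v i, ztilde i - z (i - 1)⟫ +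
          ‖ztilde i - z (i - 1)‖ ^ 2 := by
      rw [add_sub_assoc, norm_add_sq_real, norm_smul, real_inner_smul_left]
      simp [mul_pow]
      ring
    have E2 : ‖z i - zs‖ ^ 2 = ‖z (i - 1) - zs‖ ^ 2
        - 2 * (t i * lam i) * ⟪z (i - 1) - zs, v i⟫ + (t i * lam i) ^ 2 * ‖v i‖ ^ 2 := by
      rw [hup i hi, sub_right_comm, norm_sub_sq_real, norm_smul, real_inner_smul_right]
      simp [mul_pow]
      ring
    have split : ⟪z (i - 1) - zs, v i⟫ =
        ⟪z (i - 1) - ztilde i, v i⟫ + ⟪ztilde i - zs, v i⟫ := by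
      rw [← inner_add_left, sub_add_sub_cancel]
    have hsym : ⟪z (i - 1) - ztilde i, v i⟫ = -⟪v i, ztilde i - z (i - 1)⟫ := by
      rw [show z (i - 1) - ztilde i = -(ztilde i - z (i - 1)) by abel, inner_neg_left,
        real_inner_comm]
    -- from the error criterion:
    have herr2 : 2 * lam i * ⟪v i, ztilde i - z (i - 1)⟫ + (lam i) ^ 2 * ‖v i‖ ^ 2
        + 2 * lam i * eps i ≤ -((1 - σ ^ 2) * ‖ztilde i - z (i - 1)‖ ^ 2) := by
      rw [E1] at herri; linarith
    have hmul := mul_le_mul_of_nonneg_left herr2 ht1.le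
    have htt : 0 ≤ (t i - t i ^ 2) * ((lam i) ^ 2 * ‖v i‖ ^ 2) := by
      have h1 : 0 ≤ t i - t i ^ 2 := by nlinarith
      positivity
    have hQ : 2 * (t i * lam i) * (-(eps i)) ≤ 2 * (t i * lam i) * ⟪ztilde i - zs, v i⟫ :=
      mul_le_mul_of_nonneg_left henli (by positivity : (0:ℝ) ≤ 2 * (t i * lam i))
    rw [E2, split, hsym]
    nlinarith [hmul, htt, hQ]
  -- telescoping
  have tele : ∀ zs, (zs, (0 : H)) ∈ T → ∀ k,
      (∑ i ∈ Finset.Icc 1 k, t i * ((1 - σ ^ 2) * ‖ztilde i - z (i - 1)‖ ^ 2))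
        + ‖z k - zs‖ ^ 2 ≤ ‖z 0 - zs‖ ^ 2 := by
    intro zs hzs k
    induction k with
    | zero => simp
    | succ n ih =>
      rw [Finset.sum_Icc_succ_top (Nat.succ_le_succ (Nat.zero_le n))]
      have hk := key zs hzs (n + 1) (Nat.succ_le_succ (Nat.zero_le n))
      simp only [Nat.add_sub_cancel] at hk ⊢
      linarith
  intro k hk
  set s := Finset.Icc 1 k with hs
  have hmem : ∀ i ∈ s, 1 ≤ i := fun i hi => (Finset.mem_Icc.mp hi).1
  set A : ℝ := ∑ i ∈ s, t i / (lam i) ^ 2 with hA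
  set S : ℝ := ∑ i ∈ s, t i with hSdef
  set B : ℝ := ∑ i ∈ s, t i / lam i with hB
  have hA0 : 0 ≤ A := Finset.sum_nonneg fun i hi => by
    have := (ht i (hmem i hi)).1; have := hlam i (hmem i hi); positivity
  have hS0 : 0 ≤ S := Finset.sum_nonneg fun i hi => (ht i (hmem i hi)).1.le
  have hB0 : 0 ≤ B := Finset.sum_nonneg fun i hi => by
    have := (ht i (hmem i hi)).1; have := hlam i (hmem i hi); positivity
  have hL0 : 0 ≤ Lam k := by
    rw [hLam]
    exact Finset.sum_nonneg fun i hi => by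
      have := (ht i (hmem i hi)).1; have := hlam i (hmem i hi); positivity
  -- bound on A via distance to solution set
  have hAd : (1 - σ ^ 2) * η ^ 2 * A ≤ d0 ^ 2 := by
    have hC0 : 0 ≤ (1 - σ ^ 2) * η ^ 2 * A := by positivity
    have hsq : Real.sqrt ((1 - σ ^ 2) * η ^ 2 * A) ≤ d0 := by
      rw [hd0]
      by_contra hlt
      push_neg at hlt
      obtain ⟨y, hy, hdy⟩ := (Metric.infDist_lt_iff hsol).mp hlt
      have h1 : (1 - σ ^ 2) * η ^ 2 * A ≤ ‖z 0 - y‖ ^ 2 := by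
        have hb : (1 - σ ^ 2) * η ^ 2 * A ≤
            ∑ i ∈ s, t i * ((1 - σ ^ 2) * ‖ztilde i - z (i - 1)‖ ^ 2) := by
          rw [hA, Finset.mul_sum]
          refine Finset.sum_le_sum fun i hi => ?_
          have hi1 := hmem i hi
          have hli := hlam i hi1
          have hti := (ht i hi1).1
          have hlsi := hls i hi1
          have hnn : 0 ≤ ‖ztilde i - z (i - 1)‖ := norm_nonneg _
          have h2 : η ^ 2 / (lam i) ^ 2 ≤ ‖ztilde i - z (i - 1)‖ ^ 2 := by
            rw [div_le_iff₀ (by positivity)]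
            nlinarith
          calc (1 - σ ^ 2) * η ^ 2 * (t i / (lam i) ^ 2)
              = t i * ((1 - σ ^ 2) * (η ^ 2 / (lam i) ^ 2)) := by ring
            _ ≤ t i * ((1 - σ ^ 2) * ‖ztilde i - z (i - 1)‖ ^ 2) :=
                mul_le_mul_of_nonneg_left
                  (mul_le_mul_of_nonneg_left h2 hσ2.le) hti.le
        have := tele y hy k
        have hz : 0 ≤ ‖z k - y‖ ^ 2 := by positivity
        nlinarith
      have h2 : Real.sqrt ((1 - σ ^ 2) * η ^ 2 * A) ≤ ‖z 0 - y‖ := by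
        rw [show ‖z 0 - y‖ = Real.sqrt (‖z 0 - y‖ ^ 2) from
          (Real.sqrt_sq (norm_nonneg _)).symm]
        exact Real.sqrt_le_sqrt h1
      rw [dist_eq_norm] at hdy
      linarith
    calc (1 - σ ^ 2) * η ^ 2 * A = Real.sqrt ((1 - σ ^ 2) * η ^ 2 * A) ^ 2 :=
          (Real.sq_sqrt hC0).symm
      _ ≤ d0 ^ 2 := pow_le_pow_left₀ (Real.sqrt_nonneg _) hsq 2
  -- Cauchy-Schwarz twice
  have CS1 : S ^ 2 ≤ Lam k * B := by
    have h := Finset.sum_mul_sq_le_sq_mul_sq s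
      (fun i => Real.sqrt (t i * lam i)) (fun i => Real.sqrt (t i / lam i))
    have e1 : ∑ i ∈ s, Real.sqrt (t i * lam i) * Real.sqrt (t i / lam i) = S := by
      refine Finset.sum_congr rfl fun i hi => ?_
      have hti := (ht i (hmem i hi)).1
      have hli := hlam i (hmem i hi)
      rw [← Real.sqrt_mul (by positivity)]
      rw [show t i * lam i * (t i / lam i) = t i ^ 2 by field_simp]
      exact Real.sqrt_sq hti.le
    have e2 : ∑ i ∈ s, Real.sqrt (t i * lam i) ^ 2 = Lam k := by
      rw [hLam]
      refine Finset.sum_congr rfl fun i hi => ?_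
      have hti := (ht i (hmem i hi)).1
      have hli := hlam i (hmem i hi)
      exact Real.sq_sqrt (by positivity)
    have e3 : ∑ i ∈ s, Real.sqrt (t i / lam i) ^ 2 = B := by
      refine Finset.sum_congr rfl fun i hi => ?_
      have hti := (ht i (hmem i hi)).1
      have hli := hlam i (hmem i hi)
      exact Real.sq_sqrt (by positivity)
    rwa [e1, e2, e3] at h
  have CS2 : B ^ 2 ≤ S * A := by
    have h := Finset.sum_mul_sq_le_sq_mul_sq s
      (fun i => Real.sqrt (t i)) (fun i => Real.sqrt (t i / (lam i) ^ 2))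
    have e1 : ∑ i ∈ s, Real.sqrt (t i) * Real.sqrt (t i / (lam i) ^ 2) = B := by
      refine Finset.sum_congr rfl fun i hi => ?_
      have hti := (ht i (hmem i hi)).1
      have hli := hlam i (hmem i hi)
      rw [← Real.sqrt_mul hti.le]
      rw [show t i * (t i / (lam i) ^ 2) = (t i / lam i) ^ 2 by field_simp]
      exact Real.sqrt_sq (by positivity)
    have e2 : ∑ i ∈ s, Real.sqrt (t i) ^ 2 = S := by
      refine Finset.sum_congr rfl fun i hi => ?_
      exact Real.sq_sqrt (ht i (hmem i hi)).1.le
    have e3 : ∑ i ∈ s, Real.sqrt (t i / (lam i) ^ 2) ^ 2 = A := by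
      refine Finset.sum_congr rfl fun i hi => ?_
      have hti := (ht i (hmem i hi)).1
      have hli := hlam i (hmem i hi)
      exact Real.sq_sqrt (by positivity)
    rwa [e1, e2, e3] at h
  have hSpos : 0 < S := by
    have h1 : (1:ℕ) ∈ s := Finset.mem_Icc.mpr ⟨le_refl 1, hk⟩
    have := (ht 1 le_rfl).1
    exact Finset.sum_pos' (fun i hi => (ht i (hmem i hi)).1.le) ⟨1, h1, this⟩
  have hS3 : S ^ 3 ≤ Lam k ^ 2 * A := by
    have h4 : S ^ 4 ≤ Lam k ^ 2 * (S * A) := by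
      have a1 : (S ^ 2) ^ 2 ≤ (Lam k * B) ^ 2 := pow_le_pow_left₀ (sq_nonneg S) CS1 2
      nlinarith [mul_le_mul_of_nonneg_left CS2 (sq_nonneg (Lam k))]
    nlinarith [h4, hSpos]
  -- lower bound on S
  have hSlb : τ * k ≤ S := by
    have hcard : s.card = k := by rw [hs, Nat.card_Icc]; omega
    calc τ * k = s.card • τ := by rw [hcard, nsmul_eq_mul]; ring
      _ = ∑ _i ∈ s, τ := (Finset.sum_const τ).symm
      _ ≤ S := Finset.sum_le_sum fun i hi => htτ i (hmem i hi)
  have htk0 : (0:ℝ) ≤ τ * k := by positivity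
  -- final computation
  rw [ge_iff_le, div_le_iff₀ hd0pos]
  have hpow : (τ * k) ^ ((3:ℝ)/2) = Real.sqrt ((τ * k) ^ 3) := by
    rw [Real.sqrt_eq_rpow, ← Real.rpow_natCast (τ * ↑k) 3, ← Real.rpow_mul htk0]
    norm_num
  have hfinal : (τ * k) ^ 3 * (η ^ 2 * (1 - σ ^ 2)) ≤ (Lam k * d0) ^ 2 := by
    have h1 : (τ * k) ^ 3 ≤ S ^ 3 := pow_le_pow_left₀ htk0 hSlb 3
    have h2 : S ^ 3 * (η ^ 2 * (1 - σ ^ 2)) ≤ Lam k ^ 2 * A * (η ^ 2 * (1 - σ ^ 2)) :=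
      mul_le_mul_of_nonneg_right hS3 (by positivity)
    have h3 : Lam k ^ 2 * A * (η ^ 2 * (1 - σ ^ 2)) ≤ Lam k ^ 2 * d0 ^ 2 := by
      have : Lam k ^ 2 * ((1 - σ ^ 2) * η ^ 2 * A) ≤ Lam k ^ 2 * d0 ^ 2 :=
        mul_le_mul_of_nonneg_left hAd (sq_nonneg _)
      nlinarith [this]
    calc (τ * k) ^ 3 * (η ^ 2 * (1 - σ ^ 2))
        ≤ S ^ 3 * (η ^ 2 * (1 - σ ^ 2)) :=
          mul_le_mul_of_nonneg_right h1 (by positivity)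
      _ ≤ Lam k ^ 2 * A * (η ^ 2 * (1 - σ ^ 2)) := h2
      _ ≤ Lam k ^ 2 * d0 ^ 2 := h3
      _ = (Lam k * d0) ^ 2 := by ring
  calc (τ * k) ^ ((3:ℝ)/2) * η * Real.sqrt (1 - σ ^ 2)
      = Real.sqrt ((τ * k) ^ 3 * (η ^ 2 * (1 - σ ^ 2))) := by
        rw [hpow, Real.sqrt_mul (by positivity), Real.sqrt_mul (by positivity),
          Real.sqrt_sq hη.le]
        ring
    _ ≤ Real.sqrt ((Lam k * d0) ^ 2) := Real.sqrt_le_sqrt hfinal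
    _ = Lam k * d0 := Real.sqrt_sq (by positivity)
end

section
/- Assume the large-step condition λ_k‖z̃_k - z_{k-1}‖ ≥ η > 0 and t_k ≥ τ > 0 for all k ≥ 1, and that T⁻¹(0) = {z : 0 ∈ T(z)} is nonempty with d₀ the distance from z₀ to T⁻¹(0). Then for every k ≥ 1 there exists an index i with 1 ≤ i ≤ k such that ‖v_i‖ ≤ d₀² / (η(1-σ)kτ) and ε_i ≤ (σ²/(2η)) · d₀³ / ((1-σ²)kτ)^{3/2}. -/
open scoped RealInnerProductSpace

/-- One-step descent inequality for the r-HPE method. -/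
private lemma hpe_descent {H : Type*} [NormedAddCommGroup H] [InnerProductSpace ℝ H]
    (zs zp zt vv : H) (ε l t σ : ℝ) (ht0 : 0 < t) (ht1 : t ≤ 1)
    (hl : 0 < l) (hε : 0 ≤ ε)
    (henl : ⟪zt - zs, vv⟫ ≥ -ε)
    (herr : ‖l • vv + zt - zp‖ ^ 2 + 2 * l * ε ≤ σ ^ 2 * ‖zt - zp‖ ^ 2) :
    ‖(zp - (t * l) • vv) - zs‖ ^ 2 ≤ ‖zp - zs‖ ^ 2 - t * (1 - σ ^ 2) * ‖zt - zp‖ ^ 2 := by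
  have ha : l • vv + zt - zp = l • vv + (zt - zp) := by abel
  have e2 : ‖l • vv + (zt - zp)‖ ^ 2
      = l ^ 2 * ‖vv‖ ^ 2 + 2 * (l * ⟪zt - zp, vv⟫) + ‖zt - zp‖ ^ 2 := by
    rw [norm_add_sq_real, real_inner_smul_left, real_inner_comm, norm_smul]
    simp [mul_pow, sq_abs]
  rw [ha, e2] at herr
  have hb : (zp - (t * l) • vv) - zs = (zp - zs) - (t * l) • vv := by abel
  have e3 : ‖(zp - zs) - (t * l) • vv‖ ^ 2
      = ‖zp - zs‖ ^ 2 - 2 * ((t * l) * ⟪zp - zs, vv⟫) + (t * l) ^ 2 * ‖vv‖ ^ 2 := by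
    rw [norm_sub_sq_real, real_inner_smul_right, norm_smul]
    simp [mul_pow, sq_abs]
  have e1 : ⟪zp - zs, vv⟫ = -⟪zt - zp, vv⟫ + ⟪zt - zs, vv⟫ := by
    simp only [inner_sub_left]
    ring
  rw [hb, e3, e1]
  have h1 : 0 ≤ t * (1 - t) := mul_nonneg ht0.le (by linarith)
  have h2 : 0 ≤ ⟪zt - zs, vv⟫ + ε := by linarith
  nlinarith [mul_le_mul_of_nonneg_left herr ht0.le, sq_nonneg (l * ‖vv‖),
    mul_nonneg (mul_nonneg ht0.le hl.le) h2, mul_nonneg h1 (sq_nonneg (l * ‖vv‖))]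

private lemma rpow_sq_three_halves (x : ℝ) (hx : 0 ≤ x) :
    (x ^ 2 : ℝ) ^ ((3 : ℝ) / 2) = x ^ 3 := by
  rw [← Real.rpow_natCast x 2, ← Real.rpow_mul hx, ← Real.rpow_natCast x 3]
  norm_num

set_option maxHeartbeats 1000000 in
/-- Theorem 4, item 1 (pointwise complexity under the large-step condition):
for every k ≥ 1 there is 1 ≤ i ≤ k with `‖vᵢ‖ ≤ d₀²/(η(1-σ)kτ)` and
`εᵢ ≤ (σ²/(2η))·d₀³/((1-σ²)kτ)^{3/2}`. -/
theorem stmt_14 {H : Type*} [NormedAddCommGroup H] [InnerProductSpace ℝ H] [CompleteSpace H]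
    (T : Set (H × H)) (z ztilde v : ℕ → H) (eps lam t : ℕ → ℝ) (σ : ℝ)
    (hσ0 : 0 ≤ σ) (hσ1 : σ < 1)
    (heps : ∀ k ≥ 1, 0 ≤ eps k) (hlam : ∀ k ≥ 1, 0 < lam k)
    (ht : ∀ k ≥ 1, 0 < t k ∧ t k ≤ 1)
    (henl : ∀ k ≥ 1, ∀ p ∈ T, ⟪ztilde k - p.1, v k - p.2⟫ ≥ -(eps k))
    (herr : ∀ k ≥ 1, ‖lam k • v k + ztilde k - z (k - 1)‖ ^ 2 + 2 * lam k * eps k ≤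
      σ ^ 2 * ‖ztilde k - z (k - 1)‖ ^ 2)
    (hup : ∀ k ≥ 1, z k = z (k - 1) - (t k * lam k) • v k)
    (η τ : ℝ) (hη : 0 < η) (hτ : 0 < τ)
    (hls : ∀ k ≥ 1, η ≤ lam k * ‖ztilde k - z (k - 1)‖)
    (htτ : ∀ k ≥ 1, τ ≤ t k)
    (hsol : {x : H | (x, (0 : H)) ∈ T}.Nonempty)
    (d0 : ℝ) (hd0 : d0 = Metric.infDist (z 0) {x : H | (x, (0 : H)) ∈ T}) :
    ∀ k ≥ 1, ∃ i, 1 ≤ i ∧ i ≤ k ∧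
      ‖v i‖ ≤ d0 ^ 2 / (η * (1 - σ) * k * τ) ∧
      eps i ≤ σ ^ 2 / (2 * η) * (d0 ^ 3 / ((1 - σ ^ 2) * k * τ) ^ ((3 : ℝ) / 2)) := by
  intro k hk
  have hσ2 : 0 < 1 - σ ^ 2 := by nlinarith
  have hk0 : (0 : ℝ) < (k : ℝ) := by exact_mod_cast Nat.lt_of_lt_of_le Nat.zero_lt_one hk
  -- choose the index with minimal ‖ztilde i - z (i-1)‖
  obtain ⟨i, hiIcc, hmin⟩ := Finset.exists_min_image (Finset.Icc 1 k)
    (fun j => ‖ztilde j - z (j - 1)‖) ⟨1, Finset.mem_Icc.mpr ⟨le_refl 1, hk⟩⟩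
  obtain ⟨hi1, hik⟩ := Finset.mem_Icc.mp hiIcc
  set m : ℝ := ‖ztilde i - z (i - 1)‖ with hm
  have hm0 : 0 ≤ m := norm_nonneg _
  -- the summed descent inequality, for each solution point
  have key : ∀ w ∈ {x : H | (x, (0 : H)) ∈ T},
      (1 - σ ^ 2) * (k : ℝ) * τ * m ^ 2 ≤ dist (z 0) w ^ 2 := by
    intro w hw
    have hsum : ∀ n : ℕ,
        (1 - σ ^ 2) * ∑ j ∈ Finset.range n, t (j + 1) * ‖ztilde (j + 1) - z j‖ ^ 2
          ≤ ‖z 0 - w‖ ^ 2 - ‖z n - w‖ ^ 2 := by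
      intro n
      induction n with
      | zero => simp
      | succ n ih =>
        have hn1 : n + 1 ≥ 1 := by omega
        have henl' : ⟪ztilde (n + 1) - w, v (n + 1)⟫ ≥ -(eps (n + 1)) := by
          have := henl (n + 1) hn1 (w, 0) hw
          simpa using this
        have herr' : ‖lam (n + 1) • v (n + 1) + ztilde (n + 1) - z n‖ ^ 2
            + 2 * lam (n + 1) * eps (n + 1)
            ≤ σ ^ 2 * ‖ztilde (n + 1) - z n‖ ^ 2 := by
          have := herr (n + 1) hn1
          simpa using this
        have hd := hpe_descent w (z n) (ztilde (n + 1)) (v (n + 1)) (eps (n + 1))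
          (lam (n + 1)) (t (n + 1)) σ (ht (n + 1) hn1).1 (ht (n + 1) hn1).2
          (hlam (n + 1) hn1) (heps (n + 1) hn1) henl' herr'
        have hzn : z (n + 1) = z n - (t (n + 1) * lam (n + 1)) • v (n + 1) := by
          have := hup (n + 1) hn1
          simpa using this
        rw [Finset.sum_range_succ, hzn]
        nlinarith [hd, ih]
    have hterm : ∀ j ∈ Finset.range k, τ * m ^ 2 ≤ t (j + 1) * ‖ztilde (j + 1) - z j‖ ^ 2 := by
      intro j hj
      have hj' : j + 1 ∈ Finset.Icc 1 k := by
        simp only [Finset.mem_range] at hj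
        exact Finset.mem_Icc.mpr ⟨by omega, by omega⟩
      have hmj : m ≤ ‖ztilde (j + 1) - z ((j + 1) - 1)‖ := hmin (j + 1) hj'
      simp only [Nat.add_sub_cancel] at hmj
      have : m ^ 2 ≤ ‖ztilde (j + 1) - z j‖ ^ 2 := by nlinarith
      have htj : τ ≤ t (j + 1) := htτ (j + 1) (by omega)
      nlinarith [sq_nonneg m, norm_nonneg (ztilde (j + 1) - z j)]
    have hsum_lb : (k : ℝ) * (τ * m ^ 2)
        ≤ ∑ j ∈ Finset.range k, t (j + 1) * ‖ztilde (j + 1) - z j‖ ^ 2 := by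
      calc (k : ℝ) * (τ * m ^ 2)
          = ∑ _j ∈ Finset.range k, τ * m ^ 2 := by
            rw [Finset.sum_const, Finset.card_range, nsmul_eq_mul]
        _ ≤ _ := Finset.sum_le_sum hterm
    have h1 := hsum k
    have h2 : 0 ≤ ‖z k - w‖ ^ 2 := sq_nonneg _
    have h3 : dist (z 0) w = ‖z 0 - w‖ := dist_eq_norm _ _
    rw [h3]
    nlinarith [mul_le_mul_of_nonneg_left hsum_lb hσ2.le]
  -- bound via the distance to the solution set
  set R : ℝ := (1 - σ ^ 2) * (k : ℝ) * τ with hR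
  have hRpos : 0 < R := mul_pos (mul_pos hσ2 hk0) hτ
  have hRm2 : 0 ≤ R * m ^ 2 := mul_nonneg hRpos.le (sq_nonneg m)
  have hd0nn : 0 ≤ d0 := hd0 ▸ Metric.infDist_nonneg
  have hRm : R * m ^ 2 ≤ d0 ^ 2 := by
    have hsq : Real.sqrt (R * m ^ 2) ≤ d0 := by
      rw [hd0]
      refine le_of_not_gt fun hlt => ?_
      obtain ⟨y, hy, hdy⟩ := (Metric.infDist_lt_iff hsol).1 hlt
      have h1 := key y hy
      have h2 : dist (z 0) y ≤ Real.sqrt (R * m ^ 2) := hdy.le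
      have h3 : dist (z 0) y ^ 2 ≤ R * m ^ 2 := by
        calc dist (z 0) y ^ 2 ≤ Real.sqrt (R * m ^ 2) ^ 2 := by
              exact pow_le_pow_left₀ dist_nonneg h2 2
          _ = R * m ^ 2 := Real.sq_sqrt hRm2
      have : ¬ (R * m ^ 2 ≤ dist (z 0) y ^ 2) := by
        have hne : dist (z 0) y < Real.sqrt (R * m ^ 2) := hdy
        have : dist (z 0) y ^ 2 < R * m ^ 2 := by
          nlinarith [Real.sq_sqrt hRm2, Real.sqrt_nonneg (R * m ^ 2), dist_nonneg (x := z 0) (y := y)]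
        linarith
      exact this h1
    calc R * m ^ 2 = Real.sqrt (R * m ^ 2) ^ 2 := (Real.sq_sqrt hRm2).symm
      _ ≤ d0 ^ 2 := pow_le_pow_left₀ (Real.sqrt_nonneg _) hsq 2
  -- now the pointwise bounds at index i
  have hli : 0 < lam i := hlam i hi1
  have hlsi : η ≤ lam i * m := hls i hi1
  have hmpos : 0 < m := by nlinarith
  have herri := herr i hi1
  rw [← hm] at herri
  have hepsi := heps i hi1
  -- ‖lam i • v i + ztilde i - z (i-1)‖ ≤ σ m
  have hXsq : ‖lam i • v i + ztilde i - z (i - 1)‖ ^ 2 ≤ σ ^ 2 * m ^ 2 := by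
    nlinarith [herri, mul_nonneg hli.le hepsi]
  have hX : ‖lam i • v i + ztilde i - z (i - 1)‖ ≤ σ * m := by
    nlinarith [norm_nonneg (lam i • v i + ztilde i - z (i - 1)), mul_nonneg hσ0 hm0]
  have htri : lam i * ‖v i‖ ≤ (1 + σ) * m := by
    have h4 : ‖lam i • v i‖ ≤ ‖lam i • v i + ztilde i - z (i - 1)‖ + ‖ztilde i - z (i - 1)‖ := by
      have h := norm_sub_le (lam i • v i + ztilde i - z (i - 1)) (ztilde i - z (i - 1))
      have e : lam i • v i + ztilde i - z (i - 1) - (ztilde i - z (i - 1)) = lam i • v i := by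
        abel
      rwa [e] at h
    have h5 : ‖lam i • v i‖ = lam i * ‖v i‖ := by
      rw [norm_smul, Real.norm_eq_abs, abs_of_pos hli]
    rw [h5] at h4
    rw [← hm] at h4
    linarith
  refine ⟨i, hi1, hik, ?_, ?_⟩
  · -- velocity bound
    have hden : 0 < η * (1 - σ) * (k : ℝ) * τ := mul_pos (mul_pos (mul_pos hη (by linarith)) hk0) hτ
    rw [le_div_iff₀ hden]
    have c1 : η * ‖v i‖ ≤ (1 + σ) * m ^ 2 := by
      nlinarith [norm_nonneg (v i), mul_nonneg (norm_nonneg (v i)) (sub_nonneg.2 hlsi),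
        mul_nonneg hm0 (sub_nonneg.2 htri)]
    have c2 : (1 - σ) * (k : ℝ) * τ * (η * ‖v i‖) ≤ (1 - σ) * (k : ℝ) * τ * ((1 + σ) * m ^ 2) :=
      mul_le_mul_of_nonneg_left c1 (le_of_lt (mul_pos (mul_pos (by linarith : (0:ℝ) < 1 - σ) hk0) hτ))
    have c3 : (1 - σ) * (k : ℝ) * τ * ((1 + σ) * m ^ 2) = R * m ^ 2 := by
      rw [hR]; ring
    nlinarith [c2, hRm]
  · -- eps bound
    have hRp : 0 < R ^ ((3 : ℝ) / 2) := Real.rpow_pos_of_pos hRpos _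
    have hc2 : 2 * η * eps i ≤ σ ^ 2 * m ^ 3 := by
      have h6 : 2 * lam i * eps i ≤ σ ^ 2 * m ^ 2 := by
        nlinarith [sq_nonneg ‖lam i • v i + ztilde i - z (i - 1)‖,
          norm_nonneg (lam i • v i + ztilde i - z (i - 1))]
      nlinarith [mul_le_mul_of_nonneg_left h6 hm0,
        mul_nonneg hepsi (sub_nonneg.2 hlsi)]
    have hc3 : m ^ 3 * R ^ ((3 : ℝ) / 2) ≤ d0 ^ 3 := by
      have := Real.rpow_le_rpow hRm2 hRm (by norm_num : (0:ℝ) ≤ 3 / 2)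
      rw [Real.mul_rpow hRpos.le (sq_nonneg m), rpow_sq_three_halves m hm0,
        rpow_sq_three_halves d0 hd0nn] at this
      linarith [this]
    have hgoal : eps i * (2 * η * R ^ ((3 : ℝ) / 2)) ≤ σ ^ 2 * d0 ^ 3 := by
      nlinarith [mul_le_mul_of_nonneg_right hc2 hRp.le,
        mul_le_mul_of_nonneg_left hc3 (sq_nonneg σ)]
    rw [div_mul_div_comm, le_div_iff₀ (by positivity : (0:ℝ) < 2 * η * R ^ ((3:ℝ)/2))]
    linarith [hgoal]
end

section
/- Assume the large-step condition λ_k‖z̃_k - z_{k-1}‖ ≥ η > 0 and t_k ≥ τ > 0 for all k ≥ 1, and that T⁻¹(0) = {z : 0 ∈ T(z)} is nonempty with d₀ the distance from z₀ to T⁻¹(0). Then for every k ≥ 1 the ergodic iterates satisfy v_k^a ∈ T^[ε_k^a](z̃_k^a), ‖v_k^a‖ ≤ 2d₀² / ((τk)^{3/2} η √(1-σ²)), and ε_k^a ≤ 2d₀³ / ((τk)^{3/2} η (1-σ²)). -/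
open scoped RealInnerProductSpace

private lemma aux_sqle (a b : ℝ) (ha : 0 ≤ a) (hb : 0 ≤ b) (h : a ^ 2 ≤ b ^ 2) : a ≤ b := by
  nlinarith [mul_nonneg ha hb]

section Aux
variable {H : Type*} [NormedAddCommGroup H] [InnerProductSpace ℝ H]

private lemma aux_step (σ lam t eps : ℝ) (zp zt v w : H) (ht0 : 0 < t) (ht1 : t ≤ 1)
    (herr : ‖lam • v + zt - zp‖ ^ 2 + 2 * lam * eps ≤ σ ^ 2 * ‖zt - zp‖ ^ 2) :
    ‖zp - (t * lam) • v - w‖ ^ 2 + (1 - σ ^ 2) * (t * ‖zt - zp‖ ^ 2)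
      + 2 * (t * lam) * (eps + ⟪zt - w, v⟫) ≤ ‖zp - w‖ ^ 2 := by
  have e1 : lam • v + zt - zp = lam • v + (zt - zp) := by abel
  rw [e1, norm_add_sq_real] at herr
  have e2 : zp - (t * lam) • v - w = (zp - w) - (t * lam) • v := by abel
  rw [e2, norm_sub_sq_real]
  have e3 : ⟪zt - w, v⟫ = ⟪zp - w, v⟫ + ⟪zt - zp, v⟫ := by
    rw [← inner_add_left]; congr 1; abel
  rw [e3]
  have e4 : ⟪zp - w, (t * lam) • v⟫ = (t * lam) * ⟪zp - w, v⟫ := real_inner_smul_right _ _ _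
  have e5 : ‖(t * lam) • v‖ ^ 2 = (t * lam) ^ 2 * ‖v‖ ^ 2 := by
    rw [norm_smul, mul_pow, Real.norm_eq_abs, sq_abs]
  have e6 : ‖lam • v‖ ^ 2 = lam ^ 2 * ‖v‖ ^ 2 := by
    rw [norm_smul, mul_pow, Real.norm_eq_abs, sq_abs]
  have e7 : ⟪lam • v, zt - zp⟫ = lam * ⟪zt - zp, v⟫ := by
    rw [real_inner_smul_left, real_inner_comm]
  rw [e4, e5] ; rw [e6, e7] at herr
  have h9 := mul_le_mul_of_nonneg_left herr ht0.le
  nlinarith [sq_nonneg (lam * ‖v‖), mul_le_mul_of_nonneg_right (mul_le_mul_of_nonneg_right ht1 ht0.le) (sq_nonneg (lam * ‖v‖)), sq_nonneg ‖v‖]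

set_option maxHeartbeats 1000000 in
private lemma aux_b (σ lam eps : ℝ) (zp zt v w : H) (hσ0 : 0 ≤ σ) (hσ1 : σ < 1)
    (hlam : 0 < lam) (heps : 0 ≤ eps)
    (herr : ‖lam • v + zt - zp‖ ^ 2 + 2 * lam * eps ≤ σ ^ 2 * ‖zt - zp‖ ^ 2)
    (henl : ⟪zt - w, v⟫ ≥ -eps) :
    (1 - σ ^ 2) * ‖zt - w‖ ^ 2 ≤ ‖zp - w‖ ^ 2 := by
  set a := zp - w with ha
  set b := zt - w with hb
  set s := zt - zp with hs
  set e := lam • v + s with he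
  have e1 : lam • v + zt - zp = e := by rw [he, hs]; abel
  rw [e1] at herr
  have hbu : ⟪b, lam • v⟫ ≥ -(lam * eps) := by
    rw [real_inner_smul_right]
    have := mul_le_mul_of_nonneg_left henl hlam.le
    linarith [this]
  have hbs : ⟪b, s⟫ ≤ lam * eps + ⟪b, e⟫ := by
    have h := inner_add_right (𝕜 := ℝ) b (lam • v) s
    rw [← he] at h
    linarith [hbu, h]
  have hmaster : ‖b‖ ^ 2 ≤ ‖a‖ ^ 2 + 2 * (lam * eps) + 2 * ⟪b, e⟫ - ‖s‖ ^ 2 := by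
    have hba : b = a + s := by rw [ha, hb, hs]; abel
    have h2 : ‖b‖ ^ 2 = ‖a‖ ^ 2 + 2 * ⟪a, s⟫ + ‖s‖ ^ 2 := by rw [hba, norm_add_sq_real]
    have h3 : ⟪a, s⟫ = ⟪b, s⟫ - ‖s‖ ^ 2 := by
      have h4 : ⟪b, s⟫ = ⟪a, s⟫ + ⟪s, s⟫ := by rw [hba, inner_add_left]
      rw [real_inner_self_eq_norm_sq] at h4; linarith
    linarith [hbs, h2.le, h3.le, h3.ge]
  have hle : 0 ≤ lam * eps := mul_nonneg hlam.le heps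
  have hs1 : σ ^ 2 ≤ 1 := by nlinarith
  rcases eq_or_lt_of_le hσ0 with hσz | hσp
  · have hσz' : σ = 0 := hσz.symm
    subst hσz'
    have he0 : ‖e‖ ^ 2 ≤ 0 := by nlinarith [herr]
    have hen : ‖e‖ = 0 := by nlinarith [norm_nonneg e, sq_nonneg ‖e‖]
    have hbe : ⟪b, e⟫ ≤ 0 := by
      have h := real_inner_le_norm b e
      rw [hen] at h; simpa using h
    have h2l : 2 * (lam * eps) ≤ 0 := by nlinarith [herr, sq_nonneg ‖e‖]
    nlinarith [hmaster, sq_nonneg ‖s‖]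
  · have hsq : 0 ≤ σ ^ 4 * ‖b‖ ^ 2 - 2 * σ ^ 2 * ⟪b, e⟫ + ‖e‖ ^ 2 := by
      have h := sq_nonneg ‖(σ ^ 2) • b - e‖
      rw [norm_sub_sq_real, real_inner_smul_left] at h
      have h5 : ‖(σ ^ 2) • b‖ ^ 2 = σ ^ 4 * ‖b‖ ^ 2 := by
        rw [norm_smul, mul_pow, Real.norm_eq_abs, sq_abs]; ring
      nlinarith [h, h5.le, h5.ge]
    have key : σ ^ 2 * ((1 - σ ^ 2) * ‖b‖ ^ 2) ≤ σ ^ 2 * ‖a‖ ^ 2 := by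
      have hm2 := mul_le_mul_of_nonneg_left hmaster (sq_nonneg σ)
      have h0 : 0 ≤ (lam * eps) * (1 - σ ^ 2) := mul_nonneg hle (by linarith)
      nlinarith [hm2, hsq, herr, h0]
    have hσ2 : 0 < σ ^ 2 := by positivity
    exact le_of_mul_le_mul_left key hσ2

end Aux

set_option maxHeartbeats 8000000 in
/-- Theorem 4, item 2 (ergodic complexity under the large-step condition):
for every k ≥ 1, `vₖᵃ ∈ T^[εₖᵃ](z̃ₖᵃ)`, `‖vₖᵃ‖ ≤ 2d₀²/((τk)^{3/2}η√(1-σ²))`,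
and `εₖᵃ ≤ 2d₀³/((τk)^{3/2}η(1-σ²))`. -/
theorem stmt_15 {H : Type*} [NormedAddCommGroup H] [InnerProductSpace ℝ H] [CompleteSpace H]
    (T : Set (H × H)) (z ztilde v : ℕ → H) (eps lam t : ℕ → ℝ) (σ : ℝ)
    (hσ0 : 0 ≤ σ) (hσ1 : σ < 1)
    (heps : ∀ k ≥ 1, 0 ≤ eps k) (hlam : ∀ k ≥ 1, 0 < lam k)
    (ht : ∀ k ≥ 1, 0 < t k ∧ t k ≤ 1)
    (henl : ∀ k ≥ 1, ∀ p ∈ T, ⟪ztilde k - p.1, v k - p.2⟫ ≥ -(eps k))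
    (herr : ∀ k ≥ 1, ‖lam k • v k + ztilde k - z (k - 1)‖ ^ 2 + 2 * lam k * eps k ≤
      σ ^ 2 * ‖ztilde k - z (k - 1)‖ ^ 2)
    (hup : ∀ k ≥ 1, z k = z (k - 1) - (t k * lam k) • v k)
    (Lam : ℕ → ℝ) (hLam : ∀ k, Lam k = ∑ i ∈ Finset.Icc 1 k, t i * lam i)
    (za va : ℕ → H) (ea : ℕ → ℝ)
    (hza : ∀ k, za k = (Lam k)⁻¹ • ∑ i ∈ Finset.Icc 1 k, (t i * lam i) • ztilde i)
    (hva : ∀ k, va k = (Lam k)⁻¹ • ∑ i ∈ Finset.Icc 1 k, (t i * lam i) • v i)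
    (hea : ∀ k, ea k = (Lam k)⁻¹ *
      ∑ i ∈ Finset.Icc 1 k, t i * lam i * (eps i + ⟪ztilde i - za k, v i - va k⟫))
    (η τ : ℝ) (hη : 0 < η) (hτ : 0 < τ)
    (hls : ∀ k ≥ 1, η ≤ lam k * ‖ztilde k - z (k - 1)‖)
    (htτ : ∀ k ≥ 1, τ ≤ t k)
    (hsol : {x : H | (x, (0 : H)) ∈ T}.Nonempty)
    (d0 : ℝ) (hd0 : d0 = Metric.infDist (z 0) {x : H | (x, (0 : H)) ∈ T}) :
    ∀ k ≥ 1,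
      (∀ p ∈ T, ⟪za k - p.1, va k - p.2⟫ ≥ -(ea k)) ∧
      ‖va k‖ ≤ 2 * d0 ^ 2 / ((τ * k) ^ ((3 : ℝ) / 2) * η * Real.sqrt (1 - σ ^ 2)) ∧
      ea k ≤ 2 * d0 ^ 3 / ((τ * k) ^ ((3 : ℝ) / 2) * η * (1 - σ ^ 2)) := by
  intro k hk
  have hmem : ∀ i ∈ Finset.Icc 1 k, 1 ≤ i := fun i hi => (Finset.mem_Icc.mp hi).1
  have hIne : (Finset.Icc 1 k).Nonempty := ⟨1, Finset.mem_Icc.mpr ⟨le_refl 1, hk⟩⟩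
  have htl_pos : ∀ i ∈ Finset.Icc 1 k, 0 < t i * lam i :=
    fun i hi => mul_pos (ht i (hmem i hi)).1 (hlam i (hmem i hi))
  have hΛ : 0 < Lam k := by rw [hLam]; exact Finset.sum_pos htl_pos hIne
  set β := Real.sqrt (1 - σ ^ 2) with hβdef
  have hβ2 : β ^ 2 = 1 - σ ^ 2 := Real.sq_sqrt (by nlinarith)
  have hβpos : 0 < β := Real.sqrt_pos.mpr (by nlinarith)
  have hβ1 : β ≤ 1 := by nlinarith [hβ2, hβpos]
  have hza' : (Lam k) • za k = ∑ i ∈ Finset.Icc 1 k, (t i * lam i) • ztilde i := by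
    rw [hza k, smul_smul, mul_inv_cancel₀ (ne_of_gt hΛ), one_smul]
  have hva' : (Lam k) • va k = ∑ i ∈ Finset.Icc 1 k, (t i * lam i) • v i := by
    rw [hva k, smul_smul, mul_inv_cancel₀ (ne_of_gt hΛ), one_smul]
  -- telescoping
  have tele1 : ∀ m : ℕ, z 0 - z m = ∑ i ∈ Finset.Icc 1 m, (t i * lam i) • v i := by
    intro m
    induction m with
    | zero => simp
    | succ n ih =>
        rw [Finset.sum_Icc_succ_top (by omega : 1 ≤ n + 1), ← ih,
          hup (n + 1) (by omega)]
        simp only [Nat.add_sub_cancel]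
        abel
  have hvz : (Lam k) • va k = z 0 - z k := by rw [hva', ← tele1 k]
  have hΛea : Lam k * ea k
      = ∑ i ∈ Finset.Icc 1 k, t i * lam i * (eps i + ⟪ztilde i - za k, v i - va k⟫) := by
    rw [hea k, ← mul_assoc, mul_inv_cancel₀ (ne_of_gt hΛ), one_mul]
  -- the master identity
  have hident : ∀ p1 p2 : H,
      ∑ i ∈ Finset.Icc 1 k, t i * lam i * (eps i + ⟪ztilde i - p1, v i - p2⟫)
        = Lam k * (ea k + ⟪za k - p1, va k - p2⟫) := by
    intro p1 p2
    have expand : ∀ i ∈ Finset.Icc 1 k,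
        t i * lam i * (eps i + ⟪ztilde i - p1, v i - p2⟫)
          = t i * lam i * (eps i + ⟪ztilde i - za k, v i - va k⟫)
            + ⟪(t i * lam i) • (ztilde i - za k), va k - p2⟫
            + ⟪za k - p1, (t i * lam i) • (v i - va k)⟫
            + (t i * lam i) * ⟪za k - p1, va k - p2⟫ := by
      intro i _
      have e1 : ztilde i - p1 = (ztilde i - za k) + (za k - p1) := by abel
      have e2 : v i - p2 = (v i - va k) + (va k - p2) := by abel
      rw [e1, e2]
      simp only [inner_add_left, inner_add_right, real_inner_smul_left, real_inner_smul_right]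
      ring
    rw [Finset.sum_congr rfl expand]
    rw [Finset.sum_add_distrib, Finset.sum_add_distrib, Finset.sum_add_distrib]
    have h1 : ∑ i ∈ Finset.Icc 1 k, ⟪(t i * lam i) • (ztilde i - za k), va k - p2⟫ = 0 := by
      rw [← sum_inner]
      have hz0 : ∑ i ∈ Finset.Icc 1 k, (t i * lam i) • (ztilde i - za k) = 0 := by
        have : ∀ i ∈ Finset.Icc 1 k, (t i * lam i) • (ztilde i - za k)
            = (t i * lam i) • ztilde i - (t i * lam i) • za k := fun i _ => smul_sub _ _ _
        rw [Finset.sum_congr rfl this, Finset.sum_sub_distrib, ← Finset.sum_smul,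
          ← hLam, ← hza']
        abel
      rw [hz0, inner_zero_left]
    have h2 : ∑ i ∈ Finset.Icc 1 k, ⟪za k - p1, (t i * lam i) • (v i - va k)⟫ = 0 := by
      rw [← inner_sum]
      have hz0 : ∑ i ∈ Finset.Icc 1 k, (t i * lam i) • (v i - va k) = 0 := by
        have : ∀ i ∈ Finset.Icc 1 k, (t i * lam i) • (v i - va k)
            = (t i * lam i) • v i - (t i * lam i) • va k := fun i _ => smul_sub _ _ _
        rw [Finset.sum_congr rfl this, Finset.sum_sub_distrib, ← Finset.sum_smul,
          ← hLam, ← hva']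
        abel
      rw [hz0, inner_zero_right]
    rw [h1, h2, ← Finset.sum_mul, ← hLam, ← hΛea]
    ring
  -- item 1
  have item1 : ∀ p ∈ T, ⟪za k - p.1, va k - p.2⟫ ≥ -(ea k) := by
    intro p hp
    have hnn : (0:ℝ) ≤ ∑ i ∈ Finset.Icc 1 k, t i * lam i * (eps i + ⟪ztilde i - p.1, v i - p.2⟫) :=
      Finset.sum_nonneg fun i hi => mul_nonneg (htl_pos i hi).le
        (by linarith [henl i (hmem i hi) p hp])
    rw [hident p.1 p.2] at hnn
    have := (mul_nonneg_iff_of_pos_left hΛ).mp hnn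
    linarith
  -- per-solution bounds
  have hk1 : (1:ℝ) ≤ (k:ℝ) := by exact_mod_cast hk
  have hτk0 : 0 < τ * (k:ℝ) := mul_pos hτ (by linarith)
  have key : ∀ w : H, (w, (0:H)) ∈ T →
      ‖va k‖ * ((τ * k) ^ ((3:ℝ)/2) * η * β) ≤ 2 * ‖z 0 - w‖ ^ 2 ∧
      ea k * ((τ * k) ^ ((3:ℝ)/2) * η * β ^ 2) ≤ 2 * ‖z 0 - w‖ ^ 3 := by
    intro w hw
    have henlw : ∀ i, 1 ≤ i → ⟪ztilde i - w, v i⟫ ≥ -(eps i) := by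
      intro i hi
      have h := henl i hi (w, 0) hw
      simpa using h
    have stepi : ∀ i, 1 ≤ i →
        ‖z i - w‖ ^ 2 + (1 - σ ^ 2) * (t i * ‖ztilde i - z (i-1)‖ ^ 2)
          + 2 * (t i * lam i) * (eps i + ⟪ztilde i - w, v i⟫) ≤ ‖z (i-1) - w‖ ^ 2 := by
      intro i hi
      have h := aux_step σ (lam i) (t i) (eps i) (z (i-1)) (ztilde i) (v i) w
        (ht i hi).1 (ht i hi).2 (herr i hi)
      rw [← hup i hi] at h
      exact h
    have tele2 : ∀ m : ℕ,
        (∑ i ∈ Finset.Icc 1 m, ((1 - σ ^ 2) * (t i * ‖ztilde i - z (i-1)‖ ^ 2)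
          + 2 * (t i * lam i) * (eps i + ⟪ztilde i - w, v i⟫))) + ‖z m - w‖ ^ 2
          ≤ ‖z 0 - w‖ ^ 2 := by
      intro m
      induction m with
      | zero => simp
      | succ n ih =>
          rw [Finset.sum_Icc_succ_top (by omega : 1 ≤ n + 1)]
          have h := stepi (n + 1) (by omega)
          simp only [Nat.add_sub_cancel] at h ⊢
          linarith
    have snn : ∀ i, 1 ≤ i → 0 ≤ (1 - σ ^ 2) * (t i * ‖ztilde i - z (i-1)‖ ^ 2)
          + 2 * (t i * lam i) * (eps i + ⟪ztilde i - w, v i⟫) := by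
      intro i hi
      have h1 : 0 ≤ (1 - σ ^ 2) * (t i * ‖ztilde i - z (i-1)‖ ^ 2) :=
        mul_nonneg (by nlinarith) (mul_nonneg (ht i hi).1.le (sq_nonneg _))
      have h2 : 0 ≤ eps i + ⟪ztilde i - w, v i⟫ := by linarith [henlw i hi]
      have h3 := mul_nonneg (mul_nonneg (by norm_num : (0:ℝ) ≤ 2)
        (mul_pos (ht i hi).1 (hlam i hi)).le) h2
      linarith
    have mono : ∀ m, ‖z m - w‖ ^ 2 ≤ ‖z 0 - w‖ ^ 2 := by
      intro m
      have h := tele2 m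
      have h2 : (0:ℝ) ≤ ∑ i ∈ Finset.Icc 1 m, ((1 - σ ^ 2) * (t i * ‖ztilde i - z (i-1)‖ ^ 2)
          + 2 * (t i * lam i) * (eps i + ⟪ztilde i - w, v i⟫)) :=
        Finset.sum_nonneg fun i hi => snn i (Finset.mem_Icc.mp hi).1
      linarith
    have hdw0 : (0:ℝ) ≤ ‖z 0 - w‖ := norm_nonneg _
    have bnorm : ∀ i, 1 ≤ i → β * ‖ztilde i - w‖ ≤ ‖z 0 - w‖ := by
      intro i hi
      have hb := aux_b σ (lam i) (eps i) (z (i-1)) (ztilde i) (v i) w hσ0 hσ1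
        (hlam i hi) (heps i hi) (herr i hi) (henlw i hi)
      have hm := mono (i-1)
      apply aux_sqle _ _ (mul_nonneg hβpos.le (norm_nonneg _)) hdw0
      rw [mul_pow, hβ2]
      linarith
    have hqz : (Lam k) • (za k - w) = ∑ i ∈ Finset.Icc 1 k, (t i * lam i) • (ztilde i - w) := by
      rw [smul_sub, hza']
      have he : ∀ i ∈ Finset.Icc 1 k, (t i * lam i) • (ztilde i - w)
          = (t i * lam i) • ztilde i - (t i * lam i) • w := fun i _ => smul_sub _ _ _
      rw [Finset.sum_congr rfl he, Finset.sum_sub_distrib, ← Finset.sum_smul, ← hLam]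
    have hQ : β * ‖za k - w‖ ≤ ‖z 0 - w‖ := by
      have h1 : Lam k * ‖za k - w‖ ≤ ∑ i ∈ Finset.Icc 1 k, (t i * lam i) * ‖ztilde i - w‖ := by
        calc Lam k * ‖za k - w‖ = ‖(Lam k) • (za k - w)‖ := by
              rw [norm_smul, Real.norm_eq_abs, abs_of_pos hΛ]
          _ = ‖∑ i ∈ Finset.Icc 1 k, (t i * lam i) • (ztilde i - w)‖ := by rw [hqz]
          _ ≤ ∑ i ∈ Finset.Icc 1 k, ‖(t i * lam i) • (ztilde i - w)‖ := norm_sum_le _ _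
          _ = ∑ i ∈ Finset.Icc 1 k, (t i * lam i) * ‖ztilde i - w‖ := by
              refine Finset.sum_congr rfl fun i hi => ?_
              rw [norm_smul, Real.norm_eq_abs, abs_of_pos (htl_pos i hi)]
      have h2 : β * (Lam k * ‖za k - w‖) ≤ Lam k * ‖z 0 - w‖ := by
        calc β * (Lam k * ‖za k - w‖)
            ≤ β * (∑ i ∈ Finset.Icc 1 k, (t i * lam i) * ‖ztilde i - w‖) :=
              mul_le_mul_of_nonneg_left h1 hβpos.le
          _ = ∑ i ∈ Finset.Icc 1 k, (t i * lam i) * (β * ‖ztilde i - w‖) := by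
              rw [Finset.mul_sum]; refine Finset.sum_congr rfl fun i hi => ?_; ring
          _ ≤ ∑ i ∈ Finset.Icc 1 k, (t i * lam i) * ‖z 0 - w‖ :=
              Finset.sum_le_sum fun i hi => mul_le_mul_of_nonneg_left
                (bnorm i (hmem i hi)) (htl_pos i hi).le
          _ = Lam k * ‖z 0 - w‖ := by rw [← Finset.sum_mul, ← hLam]
      have h3 : Lam k * (β * ‖za k - w‖) ≤ Lam k * ‖z 0 - w‖ := by linarith [h2]
      exact le_of_mul_le_mul_left h3 hΛ
    have hX : ‖z k - w‖ ≤ ‖z 0 - w‖ :=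
      aux_sqle _ _ (norm_nonneg _) hdw0 (mono k)
    have hvaΛ : Lam k * ‖va k‖ = ‖z 0 - z k‖ := by
      rw [← hvz, norm_smul, Real.norm_eq_abs, abs_of_pos hΛ]
    have hz0zk : ‖z 0 - z k‖ ≤ ‖z 0 - w‖ + ‖z k - w‖ := by
      have he : z 0 - z k = (z 0 - w) - (z k - w) := by abel
      rw [he]; exact norm_sub_le _ _
    have hva2 : Lam k * ‖va k‖ ≤ 2 * ‖z 0 - w‖ := by
      rw [hvaΛ]; linarith
    -- ea chain
    have hsplit := Finset.sum_add_distrib (s := Finset.Icc 1 k)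
      (f := fun i => (1 - σ ^ 2) * (t i * ‖ztilde i - z (i-1)‖ ^ 2))
      (g := fun i => 2 * (t i * lam i) * (eps i + ⟪ztilde i - w, v i⟫))
    have hdissnn : (0:ℝ) ≤ ∑ i ∈ Finset.Icc 1 k, (1 - σ ^ 2) * (t i * ‖ztilde i - z (i-1)‖ ^ 2) :=
      Finset.sum_nonneg fun i hi => mul_nonneg (by nlinarith)
        (mul_nonneg (ht i (hmem i hi)).1.le (sq_nonneg _))
    have h2nn : (0:ℝ) ≤ ∑ i ∈ Finset.Icc 1 k, 2 * (t i * lam i) * (eps i + ⟪ztilde i - w, v i⟫) :=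
      Finset.sum_nonneg fun i hi => mul_nonneg (mul_nonneg (by norm_num)
        (htl_pos i hi).le) (by linarith [henlw i (hmem i hi)])
    have hsum2 : (∑ i ∈ Finset.Icc 1 k, 2 * (t i * lam i) * (eps i + ⟪ztilde i - w, v i⟫))
        + ‖z k - w‖ ^ 2 ≤ ‖z 0 - w‖ ^ 2 := by
      have h := tele2 k
      rw [hsplit] at h
      linarith
    have hsum2' : (∑ i ∈ Finset.Icc 1 k, 2 * (t i * lam i) * (eps i + ⟪ztilde i - w, v i⟫))
        = 2 * ∑ i ∈ Finset.Icc 1 k, t i * lam i * (eps i + ⟪ztilde i - w, v i⟫) := by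
      rw [Finset.mul_sum]; refine Finset.sum_congr rfl fun i hi => ?_; ring
    have hid : ∑ i ∈ Finset.Icc 1 k, t i * lam i * (eps i + ⟪ztilde i - w, v i⟫)
        = Lam k * ea k + ⟪za k - w, z 0 - z k⟫ := by
      have h := hident w 0
      simp only [sub_zero] at h
      have h2 : (Lam k) * ⟪za k - w, va k⟫ = ⟪za k - w, z 0 - z k⟫ := by
        rw [← hvz, real_inner_smul_right]
      rw [h, mul_add, h2]
    have hip : -(‖za k - w‖ * (‖z 0 - w‖ + ‖z k - w‖)) ≤ ⟪za k - w, z 0 - z k⟫ := by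
      have h1 := abs_real_inner_le_norm (za k - w) (z 0 - z k)
      have h2 := mul_le_mul_of_nonneg_left hz0zk (norm_nonneg (za k - w))
      have h3 := neg_abs_le ⟪za k - w, z 0 - z k⟫
      linarith
    have hmain : 2 * (Lam k * ea k) ≤ ‖z 0 - w‖ ^ 2 - ‖z k - w‖ ^ 2
        + 2 * (‖za k - w‖ * (‖z 0 - w‖ + ‖z k - w‖)) := by
      rw [hsum2', hid] at hsum2
      linarith
    have heaB : β * (Lam k * ea k) ≤ 2 * ‖z 0 - w‖ ^ 2 := by
      have h1 := mul_le_mul_of_nonneg_left hmain hβpos.le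
      have hX0 : (0:ℝ) ≤ ‖z k - w‖ := norm_nonneg _
      have hQ0 : (0:ℝ) ≤ ‖za k - w‖ := norm_nonneg _
      have hbb : β * (‖z 0 - w‖ + ‖z k - w‖) ≤ 2 * ‖z 0 - w‖ := by
        nlinarith [mul_le_mul_of_nonneg_right hβ1 (add_nonneg hdw0 hX0)]
      have hprod : 0 ≤ (‖z 0 - w‖ - ‖z k - w‖) * (2 * ‖z 0 - w‖ - β * (‖z 0 - w‖ + ‖z k - w‖)) :=
        mul_nonneg (by linarith) (by linarith)
      have hq2 : 2 * ((β * ‖za k - w‖) * (‖z 0 - w‖ + ‖z k - w‖))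
          ≤ 2 * (‖z 0 - w‖ * (‖z 0 - w‖ + ‖z k - w‖)) := by
        nlinarith [mul_le_mul_of_nonneg_right hQ (add_nonneg hdw0 hX0)]
      nlinarith [h1, hprod, hq2]
    -- lower bound on Lam
    have hdiss : (∑ i ∈ Finset.Icc 1 k, (1 - σ ^ 2) * (t i * ‖ztilde i - z (i-1)‖ ^ 2))
        ≤ ‖z 0 - w‖ ^ 2 := by
      have h := tele2 k
      rw [hsplit] at h
      nlinarith [h2nn, sq_nonneg ‖z k - w‖]
    have hAd : (∑ i ∈ Finset.Icc 1 k, (1 - σ ^ 2) * (η ^ 2 * (t i / lam i ^ 2)))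
        ≤ ‖z 0 - w‖ ^ 2 := by
      refine le_trans (Finset.sum_le_sum fun i hi => ?_) hdiss
      have hli := hlam i (hmem i hi)
      have hsi := hls i (hmem i hi)
      have hts := (ht i (hmem i hi)).1
      have hsn : (0:ℝ) ≤ ‖ztilde i - z (i-1)‖ := norm_nonneg _
      have hηs : η ^ 2 ≤ lam i ^ 2 * ‖ztilde i - z (i-1)‖ ^ 2 := by nlinarith [hη]
      have hmain2 : η ^ 2 * (t i / lam i ^ 2) ≤ t i * ‖ztilde i - z (i-1)‖ ^ 2 := by
        have hl2 : (0:ℝ) < lam i ^ 2 := by positivity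
        have he : η ^ 2 * (t i / lam i ^ 2) = η ^ 2 * t i / lam i ^ 2 := by ring
        rw [he, div_le_iff₀ hl2]
        nlinarith [hηs, hts]
      exact mul_le_mul_of_nonneg_left hmain2 (by nlinarith)
    have hT : τ * (k:ℝ) ≤ ∑ i ∈ Finset.Icc 1 k, t i := by
      have h := Finset.sum_le_sum (fun i hi => htτ i (hmem i hi))
      rw [Finset.sum_const, Nat.card_Icc, nsmul_eq_mul] at h
      have : ((k + 1 - 1 : ℕ) : ℝ) = (k:ℝ) := by norm_num
      rw [this] at h
      linarith
    have hCS1 : (∑ i ∈ Finset.Icc 1 k, t i) ^ 2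
        ≤ (Lam k) * (∑ i ∈ Finset.Icc 1 k, t i / lam i) := by
      have h := Finset.sum_mul_sq_le_sq_mul_sq (Finset.Icc 1 k)
        (fun i => Real.sqrt (t i * lam i)) (fun i => Real.sqrt (t i / lam i))
      have e1 : ∑ i ∈ Finset.Icc 1 k, Real.sqrt (t i * lam i) * Real.sqrt (t i / lam i)
          = ∑ i ∈ Finset.Icc 1 k, t i := by
        refine Finset.sum_congr rfl fun i hi => ?_
        rw [← Real.sqrt_mul (htl_pos i hi).le]
        have hli := (hlam i (hmem i hi)).ne'
        have he : t i * lam i * (t i / lam i) = t i ^ 2 := by field_simp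
        rw [he, Real.sqrt_sq (ht i (hmem i hi)).1.le]
      have e2 : ∑ i ∈ Finset.Icc 1 k, Real.sqrt (t i * lam i) ^ 2 = Lam k := by
        rw [hLam]
        exact Finset.sum_congr rfl fun i hi => Real.sq_sqrt (htl_pos i hi).le
      have e3 : ∑ i ∈ Finset.Icc 1 k, Real.sqrt (t i / lam i) ^ 2
          = ∑ i ∈ Finset.Icc 1 k, t i / lam i :=
        Finset.sum_congr rfl fun i hi => Real.sq_sqrt
          (div_nonneg (ht i (hmem i hi)).1.le (hlam i (hmem i hi)).le)
      rw [e1, e2, e3] at h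
      exact h
    have hCS2 : (∑ i ∈ Finset.Icc 1 k, t i / lam i) ^ 2
        ≤ (∑ i ∈ Finset.Icc 1 k, t i) * (∑ i ∈ Finset.Icc 1 k, t i / lam i ^ 2) := by
      have h := Finset.sum_mul_sq_le_sq_mul_sq (Finset.Icc 1 k)
        (fun i => Real.sqrt (t i)) (fun i => Real.sqrt (t i / lam i ^ 2))
      have e1 : ∑ i ∈ Finset.Icc 1 k, Real.sqrt (t i) * Real.sqrt (t i / lam i ^ 2)
          = ∑ i ∈ Finset.Icc 1 k, t i / lam i := by
        refine Finset.sum_congr rfl fun i hi => ?_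
        rw [← Real.sqrt_mul (ht i (hmem i hi)).1.le]
        have hli := (hlam i (hmem i hi)).ne'
        have he : t i * (t i / lam i ^ 2) = (t i / lam i) ^ 2 := by field_simp
        rw [he, Real.sqrt_sq (div_nonneg (ht i (hmem i hi)).1.le (hlam i (hmem i hi)).le)]
      have e2 : ∑ i ∈ Finset.Icc 1 k, Real.sqrt (t i) ^ 2 = ∑ i ∈ Finset.Icc 1 k, t i :=
        Finset.sum_congr rfl fun i hi => Real.sq_sqrt (ht i (hmem i hi)).1.le
      have e3 : ∑ i ∈ Finset.Icc 1 k, Real.sqrt (t i / lam i ^ 2) ^ 2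
          = ∑ i ∈ Finset.Icc 1 k, t i / lam i ^ 2 :=
        Finset.sum_congr rfl fun i hi => Real.sq_sqrt
          (div_nonneg (ht i (hmem i hi)).1.le (sq_nonneg _))
      rw [e1, e2, e3] at h
      exact h
    have hTpos : (0:ℝ) < ∑ i ∈ Finset.Icc 1 k, t i :=
      lt_of_lt_of_le hτk0 hT
    have hApos : (0:ℝ) ≤ ∑ i ∈ Finset.Icc 1 k, t i / lam i ^ 2 :=
      Finset.sum_nonneg fun i hi => div_nonneg (ht i (hmem i hi)).1.le (sq_nonneg _)
    have hAd' : (1 - σ ^ 2) * (η ^ 2 * ∑ i ∈ Finset.Icc 1 k, t i / lam i ^ 2)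
        ≤ ‖z 0 - w‖ ^ 2 := by
      have he : (1 - σ ^ 2) * (η ^ 2 * ∑ i ∈ Finset.Icc 1 k, t i / lam i ^ 2)
          = ∑ i ∈ Finset.Icc 1 k, (1 - σ ^ 2) * (η ^ 2 * (t i / lam i ^ 2)) := by
        simp only [Finset.mul_sum]
      rw [he]
      exact hAd
    have hcube : (τ * k) ^ 3 * ((1 - σ ^ 2) * η ^ 2) ≤ (Lam k) ^ 2 * ‖z 0 - w‖ ^ 2 := by
      set Ts := ∑ i ∈ Finset.Icc 1 k, t i
      set B := ∑ i ∈ Finset.Icc 1 k, t i / lam i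
      set A := ∑ i ∈ Finset.Icc 1 k, t i / lam i ^ 2
      have hBpos : (0:ℝ) ≤ B :=
        Finset.sum_nonneg fun i hi => div_nonneg (ht i (hmem i hi)).1.le (hlam i (hmem i hi)).le
      have h6 : (Ts ^ 2) ^ 2 ≤ ((Lam k) * B) ^ 2 := by
        apply pow_le_pow_left₀ (sq_nonneg Ts) hCS1
      have h8 : (Lam k) ^ 2 * B ^ 2 ≤ (Lam k) ^ 2 * (Ts * A) :=
        mul_le_mul_of_nonneg_left hCS2 (sq_nonneg _)
      have h9 : Ts ^ 4 ≤ ((Lam k) ^ 2 * A) * Ts := by nlinarith [h6, h8]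
      have h10 : Ts ^ 3 ≤ (Lam k) ^ 2 * A := by
        have := le_of_mul_le_mul_right (by nlinarith [h9] : Ts ^ 3 * Ts ≤ ((Lam k) ^ 2 * A) * Ts) hTpos
        exact this
      have h11 : (τ * k) ^ 3 ≤ Ts ^ 3 := pow_le_pow_left₀ hτk0.le hT 3
      have h12 : (τ * k) ^ 3 * ((1 - σ ^ 2) * η ^ 2) ≤ Ts ^ 3 * ((1 - σ ^ 2) * η ^ 2) := by
        have hnn : (0:ℝ) ≤ (1 - σ ^ 2) * η ^ 2 := mul_nonneg (by nlinarith) (sq_nonneg _)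
        exact mul_le_mul_of_nonneg_right h11 hnn
      have h13 : Ts ^ 3 * ((1 - σ ^ 2) * η ^ 2) ≤ ((Lam k) ^ 2 * A) * ((1 - σ ^ 2) * η ^ 2) := by
        have hnn : (0:ℝ) ≤ (1 - σ ^ 2) * η ^ 2 := mul_nonneg (by nlinarith) (sq_nonneg _)
        exact mul_le_mul_of_nonneg_right h10 hnn
      have h14 : ((Lam k) ^ 2 * A) * ((1 - σ ^ 2) * η ^ 2)
          = (Lam k) ^ 2 * ((1 - σ ^ 2) * (η ^ 2 * A)) := by ring
      have h15 : (Lam k) ^ 2 * ((1 - σ ^ 2) * (η ^ 2 * A)) ≤ (Lam k) ^ 2 * ‖z 0 - w‖ ^ 2 :=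
        mul_le_mul_of_nonneg_left hAd' (sq_nonneg _)
      linarith
    have hrp : ((τ * k) ^ ((3:ℝ)/2)) ^ 2 = (τ * k) ^ 3 := by
      rw [← Real.rpow_natCast ((τ * (k:ℝ)) ^ ((3:ℝ)/2)) 2, ← Real.rpow_mul hτk0.le,
        show ((3:ℝ)/2 * ((2:ℕ):ℝ) : ℝ) = ((3:ℕ):ℝ) by norm_num, Real.rpow_natCast]
    have hfin : (τ * k) ^ ((3:ℝ)/2) * η * β ≤ Lam k * ‖z 0 - w‖ := by
      apply aux_sqle
      · positivity
      · exact mul_nonneg hΛ.le hdw0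
      · have : ((τ * k) ^ ((3:ℝ)/2) * η * β) ^ 2 = (τ * k) ^ 3 * ((1 - σ ^ 2) * η ^ 2) := by
          rw [mul_pow, mul_pow, hrp, hβ2]; ring
        rw [this, mul_pow (Lam k) (‖z 0 - w‖) 2]
        exact hcube
    constructor
    · calc ‖va k‖ * ((τ * k) ^ ((3:ℝ)/2) * η * β)
          ≤ ‖va k‖ * (Lam k * ‖z 0 - w‖) :=
            mul_le_mul_of_nonneg_left hfin (norm_nonneg _)
        _ = (Lam k * ‖va k‖) * ‖z 0 - w‖ := by ring
        _ ≤ (2 * ‖z 0 - w‖) * ‖z 0 - w‖ := mul_le_mul_of_nonneg_right hva2 hdw0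
        _ = 2 * ‖z 0 - w‖ ^ 2 := by ring
    · rcases le_or_gt (ea k) 0 with hneg | hpos
      · have hC0 : (0:ℝ) ≤ (τ * k) ^ ((3:ℝ)/2) * η * β ^ 2 := by positivity
        have := mul_nonpos_of_nonpos_of_nonneg hneg hC0
        have h30 : (0:ℝ) ≤ 2 * ‖z 0 - w‖ ^ 3 := by positivity
        linarith
      · have hstep : ea k * β * ((τ * k) ^ ((3:ℝ)/2) * η * β) ≤ ea k * β * (Lam k * ‖z 0 - w‖) :=
          mul_le_mul_of_nonneg_left hfin (mul_nonneg hpos.le hβpos.le)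
        calc ea k * ((τ * k) ^ ((3:ℝ)/2) * η * β ^ 2)
            = ea k * β * ((τ * k) ^ ((3:ℝ)/2) * η * β) := by ring
          _ ≤ ea k * β * (Lam k * ‖z 0 - w‖) := hstep
          _ = (β * (Lam k * ea k)) * ‖z 0 - w‖ := by ring
          _ ≤ (2 * ‖z 0 - w‖ ^ 2) * ‖z 0 - w‖ := mul_le_mul_of_nonneg_right heaB hdw0
          _ = 2 * ‖z 0 - w‖ ^ 3 := by ring
  -- conclude via infimum
  have hC : (0:ℝ) < (τ * k) ^ ((3:ℝ)/2) * η * β :=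
    mul_pos (mul_pos (Real.rpow_pos_of_pos hτk0 _) hη) hβpos
  have hC2 : (0:ℝ) < (τ * k) ^ ((3:ℝ)/2) * η * (1 - σ ^ 2) := by
    have : (0:ℝ) < 1 - σ ^ 2 := by nlinarith
    exact mul_pos (mul_pos (Real.rpow_pos_of_pos hτk0 _) hη) this
  have hd0nn : 0 ≤ d0 := by rw [hd0]; exact Metric.infDist_nonneg
  refine ⟨item1, ?_, ?_⟩
  · rw [le_div_iff₀ hC]
    apply le_of_forall_gt_imp_ge_of_dense
    intro c hc
    have hc0 : 0 < c := lt_of_le_of_lt (by positivity) hc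
    set δ := Real.sqrt (c / 2) with hδ
    have hδd : d0 < δ := by
      rw [hδ]
      rw [show d0 = Real.sqrt (d0 ^ 2) from (Real.sqrt_sq hd0nn).symm]
      apply Real.sqrt_lt_sqrt (sq_nonneg _)
      linarith
    obtain ⟨y, hy, hdy⟩ := (Metric.infDist_lt_iff hsol).mp (by rw [← hd0]; exact hδd)
    have hyn : ‖z 0 - y‖ < δ := by rwa [← dist_eq_norm]
    have hkey := (key y hy).1
    have hsq : ‖z 0 - y‖ ^ 2 ≤ δ ^ 2 := by
      apply pow_le_pow_left₀ (norm_nonneg _) hyn.le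
    have hδ2 : δ ^ 2 = c / 2 := Real.sq_sqrt (by linarith)
    calc ‖va k‖ * ((τ * k) ^ ((3:ℝ)/2) * η * β) ≤ 2 * ‖z 0 - y‖ ^ 2 := hkey
      _ ≤ 2 * δ ^ 2 := by linarith
      _ = c := by rw [hδ2]; ring
  · rw [le_div_iff₀ hC2]
    have hβ2' : (1 - σ ^ 2) = β ^ 2 := hβ2.symm
    rw [hβ2']
    apply le_of_forall_gt_imp_ge_of_dense
    intro c hc
    have hc0 : 0 < c := lt_of_le_of_lt (by positivity) hc
    set δ := (c / 2) ^ ((1:ℝ)/3) with hδ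
    have hδ0 : 0 < δ := Real.rpow_pos_of_pos (by linarith) _
    have hδ3 : δ ^ 3 = c / 2 := by
      rw [hδ, ← Real.rpow_natCast ((c/2) ^ ((1:ℝ)/3)) 3, ← Real.rpow_mul (by linarith : (0:ℝ) ≤ c/2)]
      norm_num
    have hδd : d0 < δ := by
      have h3 : d0 ^ 3 < δ ^ 3 := by rw [hδ3]; linarith
      exact lt_of_pow_lt_pow_left₀ 3 hδ0.le h3
    obtain ⟨y, hy, hdy⟩ := (Metric.infDist_lt_iff hsol).mp (by rw [← hd0]; exact hδd)
    have hyn : ‖z 0 - y‖ < δ := by rwa [← dist_eq_norm]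
    have hkey := (key y hy).2
    have hcb : ‖z 0 - y‖ ^ 3 ≤ δ ^ 3 := by
      apply pow_le_pow_left₀ (norm_nonneg _) hyn.le
    calc ea k * ((τ * k) ^ ((3:ℝ)/2) * η * β ^ 2) ≤ 2 * ‖z 0 - y‖ ^ 3 := hkey
      _ ≤ 2 * δ ^ 3 := by linarith
      _ = c := by rw [hδ3]; ring
end

section
/- For every k ≥ 1 and every z* ∈ H with 0 ∈ T(z*), the r-HPE iterates satisfy ‖z_k - z₀‖ ≤ 2‖z* - z₀‖; consequently, if T⁻¹(0) is nonempty and d₀ is the distance from z₀ to T⁻¹(0), then ‖z_k - z₀‖ ≤ 2d₀ for all k. -/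
open scoped RealInnerProductSpace

/-- For every k ≥ 1 and every zero z* of T, `‖zₖ-z₀‖ ≤ 2‖z*-z₀‖`; consequently,
if T⁻¹(0) ≠ ∅ and d₀ = dist(z₀, T⁻¹(0)), then `‖zₖ-z₀‖ ≤ 2d₀`. -/
theorem stmt_16 {H : Type*} [NormedAddCommGroup H] [InnerProductSpace ℝ H] [CompleteSpace H]
    (T : Set (H × H)) (z ztilde v : ℕ → H) (eps lam t : ℕ → ℝ) (σ : ℝ)
    (hσ0 : 0 ≤ σ) (hσ1 : σ < 1)
    (heps : ∀ k ≥ 1, 0 ≤ eps k) (hlam : ∀ k ≥ 1, 0 < lam k)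
    (ht : ∀ k ≥ 1, 0 < t k ∧ t k ≤ 1)
    (henl : ∀ k ≥ 1, ∀ p ∈ T, ⟪ztilde k - p.1, v k - p.2⟫ ≥ -(eps k))
    (herr : ∀ k ≥ 1, ‖lam k • v k + ztilde k - z (k - 1)‖ ^ 2 + 2 * lam k * eps k ≤
      σ ^ 2 * ‖ztilde k - z (k - 1)‖ ^ 2)
    (hup : ∀ k ≥ 1, z k = z (k - 1) - (t k * lam k) • v k) :
    ∀ k ≥ 1,
      (∀ zstar : H, (zstar, (0 : H)) ∈ T → ‖z k - z 0‖ ≤ 2 * ‖zstar - z 0‖) ∧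
      ({x : H | (x, (0 : H)) ∈ T}.Nonempty →
        ‖z k - z 0‖ ≤ 2 * Metric.infDist (z 0) {x : H | (x, (0 : H)) ∈ T}) := by
  have step : ∀ k : ℕ, ∀ zstar : H, (zstar, (0 : H)) ∈ T →
      ‖z (k + 1) - zstar‖ ≤ ‖z k - zstar‖ := by
    intro k zstar hz
    have hk : k + 1 ≥ 1 := Nat.le_add_left 1 k
    have h1 := henl (k + 1) hk (zstar, 0) hz
    have h2 := herr (k + 1) hk
    have h3 := hup (k + 1) hk
    have ht' := ht (k + 1) hk
    have hl := hlam (k + 1) hk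
    have he := heps (k + 1) hk
    simp only [Nat.add_sub_cancel] at h2 h3
    simp only [sub_zero] at h1
    set L := lam (k + 1) with hL
    set tt := t (k + 1) with htt
    set w := v (k + 1) with hw
    set a := ztilde (k + 1) - z k with ha
    have exp2 : ‖L • w + ztilde (k + 1) - z k‖ ^ 2
        = L ^ 2 * ‖w‖ ^ 2 + 2 * (L * ⟪w, a⟫) + ‖a‖ ^ 2 := by
      have e : L • w + ztilde (k + 1) - z k = L • w + a := by rw [ha]; abel
      rw [e, norm_add_sq_real, real_inner_smul_left, norm_smul, Real.norm_eq_abs,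
        mul_pow, sq_abs]
    rw [exp2] at h2
    have hdec : ⟪z k - zstar, w⟫ = ⟪ztilde (k + 1) - zstar, w⟫ - ⟪a, w⟫ := by
      rw [← inner_sub_left]
      congr 1
      rw [ha]; abel
    have hsym : ⟪a, w⟫ = ⟪w, a⟫ := real_inner_comm w a
    have expf : ‖z (k + 1) - zstar‖ ^ 2
        = ‖z k - zstar‖ ^ 2 - 2 * ((tt * L) * ⟪z k - zstar, w⟫)
          + (tt * L) ^ 2 * ‖w‖ ^ 2 := by
      rw [h3]
      have e : z k - (tt * L) • w - zstar = (z k - zstar) - (tt * L) • w := by abel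
      rw [e, norm_sub_sq_real, real_inner_smul_right, norm_smul, Real.norm_eq_abs,
        mul_pow, sq_abs]
    have hσ2 : σ ^ 2 ≤ 1 := by nlinarith
    have key : L ^ 2 * ‖w‖ ^ 2 ≤ 2 * (L * ⟪z k - zstar, w⟫) := by
      nlinarith [sq_nonneg ‖a‖, mul_le_mul_of_nonneg_left h1 (by linarith : (0:ℝ) ≤ 2 * L)]
    have hsq : ‖z (k + 1) - zstar‖ ^ 2 ≤ ‖z k - zstar‖ ^ 2 := by
      rw [expf]
      nlinarith [mul_le_mul_of_nonneg_left key ht'.1.le,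
        mul_nonneg (mul_nonneg ht'.1.le (by linarith [ht'.2] : (0:ℝ) ≤ 1 - tt))
          (mul_nonneg (sq_nonneg L) (sq_nonneg ‖w‖))]
    nlinarith [norm_nonneg (z (k + 1) - zstar), norm_nonneg (z k - zstar)]
  have mono : ∀ k : ℕ, ∀ zstar : H, (zstar, (0 : H)) ∈ T →
      ‖z k - zstar‖ ≤ ‖z 0 - zstar‖ := by
    intro k
    induction k with
    | zero => intro zstar _; exact le_rfl
    | succ n ih => intro zstar hz; exact (step n zstar hz).trans (ih zstar hz)
  intro k hk
  have main : ∀ zstar : H, (zstar, (0 : H)) ∈ T → ‖z k - z 0‖ ≤ 2 * ‖zstar - z 0‖ := by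
    intro zstar hz
    have h := mono k zstar hz
    have tri : ‖z k - z 0‖ ≤ ‖z k - zstar‖ + ‖zstar - z 0‖ := by
      have := norm_sub_le_norm_sub_add_norm_sub (z k) zstar (z 0)
      linarith
    have hrev : ‖z 0 - zstar‖ = ‖zstar - z 0‖ := norm_sub_rev _ _
    linarith
  refine ⟨main, fun hne => ?_⟩
  have h2 : ‖z k - z 0‖ / 2 ≤ Metric.infDist (z 0) {x : H | (x, (0 : H)) ∈ T} := by
    by_contra hc
    push_neg at hc
    obtain ⟨y, hy, hd⟩ := (Metric.infDist_lt_iff hne).mp hc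
    have := main y hy
    rw [dist_eq_norm, norm_sub_rev] at hd
    linarith
  linarith
end
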